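/- arXiv:1911.06850 — 11 statements merged into one kernel-verified Lean document; each statement's English description precedes it below -/
import Mathlib

section
/- Let X and Y be measurable spaces, γ a probability measure on X×Y with marginals ρ₁ and ρ₂, and m₁ ∈ P(X), m₂ ∈ P(Y) reference measures. Then KL(γ | m₁⊗m₂) = KL(γ | ρ₁⊗ρ₂) + KL(ρ₁ | m₁) + KL(ρ₂ | m₂), where both sides may be +∞. -/
/-!
Write `ρ₁, ρ₂` for the marginals of `γ`. Since
`ρ₁ ⊗ ρ₂ = (m₁ ⊗ m₂).withDensity (dρ₁/dm₁ ⊗ dρ₂/dm₂)`, the chain rule for Radon–Nikodym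
derivatives gives, `γ`-almost everywhere,
`log dγ/d(m₁ ⊗ m₂) = log dγ/d(ρ₁ ⊗ ρ₂) + log dρ₁/dm₁ (x) + log dρ₂/dm₂ (y)`,
and the last two terms integrate against `γ` as against its marginals. Because `t log t ≥ t - 1`,
every log-likelihood ratio has an integrable negative part, so the left-hand side is integrable
exactly when the three terms on the right are; otherwise both sides are `∞`.
The identity is first established for `klDiv`, which agrees with `KL` on probability measures.
-/

open MeasureTheory Real

noncomputable section
open Classical in

/-- Kullback–Leibler divergence, valued in `EReal` (`⊤` if `μ` is not absolutely
continuous w.r.t. `ν` or the log-density is not integrable). -/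
def KL {Z : Type*} [MeasurableSpace Z] (μ ν : Measure Z) : EReal :=
  if μ ≪ ν ∧ Integrable (fun z => Real.log (μ.rnDeriv ν z).toReal) μ
  then ((∫ z, Real.log (μ.rnDeriv ν z).toReal ∂μ : ℝ) : EReal) else ⊤

open InformationTheory MeasureTheory.Measure
open scoped ENNReal

lemma neg_one_le_mul_min_log_zero {t : ℝ} (ht : 0 ≤ t) : -1 ≤ t * min (log t) 0 := by
  rcases le_total (log t) 0 with h | h
  · rw [min_eq_left h]
    nlinarith [self_sub_one_le_mul_log ht]
  · rw [min_eq_right h, mul_zero]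
    norm_num

namespace MeasureTheory

lemma integrable_add_iff_of_integrable_minorants {α : Type*} [MeasurableSpace α] {μ : Measure α}
    {f g u v : α → ℝ} (hf : AEStronglyMeasurable f μ) (hg : AEStronglyMeasurable g μ)
    (hu : Integrable u μ) (hv : Integrable v μ) (huf : u ≤ᵐ[μ] f) (hvg : v ≤ᵐ[μ] g) :
    Integrable (f + g) μ ↔ Integrable f μ ∧ Integrable g μ := by
  refine ⟨fun hfg => ⟨?_, ?_⟩, fun h => h.1.add h.2⟩
  · refine integrable_of_le_of_le hf huf ?_ hu (hfg.sub hv)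
    filter_upwards [hvg] with x hx
    simp only [Pi.add_apply, Pi.sub_apply]
    linarith
  · refine integrable_of_le_of_le hg hvg ?_ hv (hfg.sub hu)
    filter_upwards [huf] with x hx
    simp only [Pi.add_apply, Pi.sub_apply]
    linarith

section RadonNikodym

variable {α : Type*} [MeasurableSpace α] {μ ν ξ : Measure α}

lemma Measure.AbsolutelyContinuous.withDensity_of_ae_ne_zero {f : α → ℝ≥0∞}
    (hμν : μ ≪ ν) (hf : AEMeasurable f ν) (hf_ne_zero : ∀ᵐ x ∂μ, f x ≠ 0) :
    μ ≪ ν.withDensity f := by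
  refine AbsolutelyContinuous.mk fun s hs hνs => ?_
  rw [withDensity_apply _ hs, lintegral_eq_zero_iff' hf.restrict, Filter.EventuallyEq,
    ae_restrict_iff' hs] at hνs
  rw [measure_eq_zero_iff_ae_notMem]
  filter_upwards [hμν.ae_le hνs, hf_ne_zero] with x hxs hx hmem using hx (hxs hmem)

lemma Measure.toReal_rnDeriv_pos [SigmaFinite μ] [SigmaFinite ν] (hμν : μ ≪ ν) :
    ∀ᵐ x ∂μ, 0 < (μ.rnDeriv ν x).toReal := by
  filter_upwards [rnDeriv_pos hμν, hμν.ae_le (rnDeriv_ne_top μ ν)] with x hpos hfin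
  exact ENNReal.toReal_pos hpos.ne' hfin

lemma integrable_min_llr_zero [SigmaFinite μ] [IsFiniteMeasure ν] (hμν : μ ≪ ν) :
    Integrable (fun x => min (llr μ ν x) 0) μ := by
  rw [← integrable_toReal_rnDeriv_mul_iff hμν]
  refine Integrable.of_bound (Measurable.aestronglyMeasurable (by fun_prop)) 1
    (ae_of_all _ fun x => ?_)
  rw [Real.norm_eq_abs, abs_le]
  exact ⟨neg_one_le_mul_min_log_zero ENNReal.toReal_nonneg,
    (mul_nonpos_of_nonneg_of_nonpos ENNReal.toReal_nonneg (min_le_right _ _)).trans zero_le_one⟩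

lemma llr_ae_eq_llr_add_llr [SigmaFinite μ] [SigmaFinite ν] [SigmaFinite ξ]
    (hμν : μ ≪ ν) (hμξ : μ ≪ ξ) : llr μ ξ =ᵐ[μ] llr μ ν + llr ν ξ := by
  filter_upwards [hμξ.ae_le (rnDeriv_mul_rnDeriv hμν (κ := ξ)), toReal_rnDeriv_pos hμξ]
    with x hmul hpos
  have hne : (μ.rnDeriv ν x).toReal * (ν.rnDeriv ξ x).toReal ≠ 0 := by
    rw [← ENNReal.toReal_mul, ← Pi.mul_apply, hmul]
    exact hpos.ne'
  simp only [llr, Pi.add_apply, ← hmul, Pi.mul_apply, ENNReal.toReal_mul,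
    log_mul (left_ne_zero_of_mul hne) (right_ne_zero_of_mul hne)]

end RadonNikodym

section Prod

variable {X Y : Type*} [MeasurableSpace X] [MeasurableSpace Y]

lemma Measure.prod_eq_withDensity_rnDeriv {ρ₁ m₁ : Measure X} {ρ₂ m₂ : Measure Y}
    [ρ₁.HaveLebesgueDecomposition m₁] [ρ₂.HaveLebesgueDecomposition m₂] [SFinite m₂]
    (h₁ : ρ₁ ≪ m₁) (h₂ : ρ₂ ≪ m₂) :
    ρ₁.prod ρ₂ = (m₁.prod m₂).withDensity fun z => ρ₁.rnDeriv m₁ z.1 * ρ₂.rnDeriv m₂ z.2 := by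
  have := prod_withDensity (μ := m₁) (ν := m₂) (measurable_rnDeriv ρ₁ m₁) (measurable_rnDeriv ρ₂ m₂)
  rwa [withDensity_rnDeriv_eq _ _ h₁, withDensity_rnDeriv_eq _ _ h₂] at this

lemma llr_prod_ae_eq {ρ₁ m₁ : Measure X} {ρ₂ m₂ : Measure Y}
    [SigmaFinite ρ₁] [SigmaFinite m₁] [SigmaFinite ρ₂] [SigmaFinite m₂]
    (h₁ : ρ₁ ≪ m₁) (h₂ : ρ₂ ≪ m₂) :
    llr (ρ₁.prod ρ₂) (m₁.prod m₂) =ᵐ[ρ₁.prod ρ₂] fun z => llr ρ₁ m₁ z.1 + llr ρ₂ m₂ z.2 := by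
  have hrn : (ρ₁.prod ρ₂).rnDeriv (m₁.prod m₂) =ᵐ[m₁.prod m₂]
      fun z => ρ₁.rnDeriv m₁ z.1 * ρ₂.rnDeriv m₂ z.2 := by
    rw [prod_eq_withDensity_rnDeriv h₁ h₂]
    exact rnDeriv_withDensity _ (by fun_prop)
  filter_upwards [(h₁.prod h₂).ae_le hrn, quasiMeasurePreserving_fst.ae (toReal_rnDeriv_pos h₁),
    quasiMeasurePreserving_snd.ae (toReal_rnDeriv_pos h₂)] with z hz hpos₁ hpos₂
  rw [llr, hz, ENNReal.toReal_mul, log_mul hpos₁.ne' hpos₂.ne']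
  rfl

variable {γ : Measure (X × Y)} {m₁ : Measure X} {m₂ : Measure Y}

lemma Measure.AbsolutelyContinuous.fst_of_prod [SFinite m₂] (hac : γ ≪ m₁.prod m₂) :
    γ.fst ≪ m₁ :=
  (hac.map measurable_fst).trans (by rw [map_fst_prod]; exact smul_absolutelyContinuous)

lemma Measure.AbsolutelyContinuous.snd_of_prod [SFinite m₂] (hac : γ ≪ m₁.prod m₂) :
    γ.snd ≪ m₂ :=
  (hac.map measurable_snd).trans (by rw [map_snd_prod]; exact smul_absolutelyContinuous)

lemma Measure.AbsolutelyContinuous.prod_fst_snd [IsFiniteMeasure γ] [SigmaFinite m₁]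
    [SigmaFinite m₂] (hac : γ ≪ m₁.prod m₂) : γ ≪ γ.fst.prod γ.snd := by
  rw [prod_eq_withDensity_rnDeriv hac.fst_of_prod hac.snd_of_prod]
  refine hac.withDensity_of_ae_ne_zero (by fun_prop) ?_
  filter_upwards [ae_of_ae_map measurable_fst.aemeasurable (rnDeriv_pos hac.fst_of_prod),
    ae_of_ae_map measurable_snd.aemeasurable (rnDeriv_pos hac.snd_of_prod)] with z h₁ h₂
  exact mul_ne_zero h₁.ne' h₂.ne'

lemma llr_ae_eq_llr_prod_fst_snd_add [IsFiniteMeasure γ] [SigmaFinite m₁] [SigmaFinite m₂]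
    (hac : γ ≪ m₁.prod m₂) :
    llr γ (m₁.prod m₂) =ᵐ[γ]
      fun z => llr γ (γ.fst.prod γ.snd) z + (llr γ.fst m₁ z.1 + llr γ.snd m₂ z.2) := by
  filter_upwards [llr_ae_eq_llr_add_llr hac.prod_fst_snd hac,
    hac.prod_fst_snd.ae_le (llr_prod_ae_eq hac.fst_of_prod hac.snd_of_prod)] with z h hz
  rw [h, Pi.add_apply, hz]

lemma integrable_llr_prod_iff [IsFiniteMeasure γ] [IsFiniteMeasure m₁] [IsFiniteMeasure m₂]
    (hac : γ ≪ m₁.prod m₂) :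
    Integrable (llr γ (m₁.prod m₂)) γ ↔ Integrable (llr γ (γ.fst.prod γ.snd)) γ ∧
      Integrable (llr γ.fst m₁) γ.fst ∧ Integrable (llr γ.snd m₂) γ.snd := by
  have h₁ : Integrable (llr γ.fst m₁) γ.fst ↔ Integrable (fun z => llr γ.fst m₁ z.1) γ :=
    integrable_map_measure (measurable_llr _ _).aestronglyMeasurable measurable_fst.aemeasurable
  have h₂ : Integrable (llr γ.snd m₂) γ.snd ↔ Integrable (fun z => llr γ.snd m₂ z.2) γ :=
    integrable_map_measure (measurable_llr _ _).aestronglyMeasurable measurable_snd.aemeasurable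
  have hmin₁ : Integrable (fun z => min (llr γ.fst m₁ z.1) 0) γ :=
    (integrable_min_llr_zero hac.fst_of_prod).comp_measurable measurable_fst
  have hmin₂ : Integrable (fun z => min (llr γ.snd m₂ z.2) 0) γ :=
    (integrable_min_llr_zero hac.snd_of_prod).comp_measurable measurable_snd
  rw [integrable_congr (llr_ae_eq_llr_prod_fst_snd_add hac), h₁, h₂,
    ← integrable_add_iff_of_integrable_minorants (f := fun z => llr γ.fst m₁ z.1)
      (g := fun z => llr γ.snd m₂ z.2)
      ((measurable_llr _ _).comp measurable_fst).aestronglyMeasurable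
      ((measurable_llr _ _).comp measurable_snd).aestronglyMeasurable hmin₁ hmin₂
      (ae_of_all _ fun _ => min_le_left _ _) (ae_of_all _ fun _ => min_le_left _ _)]
  exact integrable_add_iff_of_integrable_minorants (measurable_llr _ _).aestronglyMeasurable
    (((measurable_llr _ _).comp measurable_fst).add
      ((measurable_llr _ _).comp measurable_snd)).aestronglyMeasurable
    (integrable_min_llr_zero hac.prod_fst_snd) (hmin₁.add hmin₂)
    (ae_of_all _ fun _ => min_le_left _ _)
    (ae_of_all _ fun _ => add_le_add (min_le_left _ _) (min_le_left _ _))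

lemma integral_llr_prod_eq_add [IsFiniteMeasure γ] [IsFiniteMeasure m₁] [IsFiniteMeasure m₂]
    (hac : γ ≪ m₁.prod m₂) (hint : Integrable (llr γ (m₁.prod m₂)) γ) :
    ∫ z, llr γ (m₁.prod m₂) z ∂γ = ∫ z, llr γ (γ.fst.prod γ.snd) z ∂γ +
      ∫ x, llr γ.fst m₁ x ∂γ.fst + ∫ y, llr γ.snd m₂ y ∂γ.snd := by
  obtain ⟨hA, hB, hC⟩ := (integrable_llr_prod_iff hac).1 hint
  have hB' : ∫ x, llr γ.fst m₁ x ∂γ.fst = ∫ z, llr γ.fst m₁ z.1 ∂γ :=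
    integral_map measurable_fst.aemeasurable (measurable_llr _ _).aestronglyMeasurable
  have hC' : ∫ y, llr γ.snd m₂ y ∂γ.snd = ∫ z, llr γ.snd m₂ z.2 ∂γ :=
    integral_map measurable_snd.aemeasurable (measurable_llr _ _).aestronglyMeasurable
  have hB₁ : Integrable (fun z => llr γ.fst m₁ z.1) γ := hB.comp_measurable measurable_fst
  have hC₁ : Integrable (fun z => llr γ.snd m₂ z.2) γ := hC.comp_measurable measurable_snd
  have hBC : Integrable (fun z => llr γ.fst m₁ z.1 + llr γ.snd m₂ z.2) γ := hB₁.add hC₁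
  rw [integral_congr_ae (llr_ae_eq_llr_prod_fst_snd_add hac), hB', hC', add_assoc,
    integral_add hA hBC, integral_add hB₁ hC₁]

end Prod

end MeasureTheory

namespace InformationTheory

variable {α : Type*} [MeasurableSpace α] {μ ν : Measure α}

lemma klDiv_eq_ofReal_integral_llr [IsProbabilityMeasure μ] [IsProbabilityMeasure ν]
    (hμν : μ ≪ ν) (hint : Integrable (llr μ ν) μ) :
    klDiv μ ν = ENNReal.ofReal (∫ x, llr μ ν x ∂μ) := by
  simp [klDiv_of_ac_of_integrable hμν hint]

lemma integral_llr_nonneg [IsProbabilityMeasure μ] [IsProbabilityMeasure ν]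
    (hμν : μ ≪ ν) (hint : Integrable (llr μ ν) μ) : 0 ≤ ∫ x, llr μ ν x ∂μ := by
  simpa using integral_llr_add_sub_measure_univ_nonneg hμν hint

theorem klDiv_prod_eq_klDiv_prod_fst_snd_add {X Y : Type*}
    [MeasurableSpace X] [MeasurableSpace Y] (γ : Measure (X × Y)) (m₁ : Measure X) (m₂ : Measure Y)
    [IsProbabilityMeasure γ] [IsProbabilityMeasure m₁] [IsProbabilityMeasure m₂] :
    klDiv γ (m₁.prod m₂) = klDiv γ (γ.fst.prod γ.snd) + klDiv γ.fst m₁ + klDiv γ.snd m₂ := by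
  by_cases hac : γ ≪ m₁.prod m₂
  swap
  · have : ¬(γ ≪ γ.fst.prod γ.snd ∧ γ.fst ≪ m₁ ∧ γ.snd ≪ m₂) :=
      fun ⟨h, h₁, h₂⟩ => hac (h.trans (h₁.prod h₂))
    simp only [not_and_or] at this
    rcases this with h | h | h <;> simp [h, hac]
  by_cases hint : Integrable (llr γ (m₁.prod m₂)) γ
  swap
  · have := (integrable_llr_prod_iff hac).not.1 hint
    simp only [not_and_or] at this
    rcases this with h | h | h <;> simp [klDiv_of_not_integrable, h, hint]
  obtain ⟨hA, hB, hC⟩ := (integrable_llr_prod_iff hac).1 hint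
  have hA₀ := integral_llr_nonneg hac.prod_fst_snd hA
  have hB₀ := integral_llr_nonneg hac.fst_of_prod hB
  have hC₀ := integral_llr_nonneg hac.snd_of_prod hC
  rw [klDiv_eq_ofReal_integral_llr hac hint, integral_llr_prod_eq_add hac hint,
    ENNReal.ofReal_add (add_nonneg hA₀ hB₀) hC₀, ENNReal.ofReal_add hA₀ hB₀,
    ← klDiv_eq_ofReal_integral_llr hac.prod_fst_snd hA,
    ← klDiv_eq_ofReal_integral_llr hac.fst_of_prod hB,
    ← klDiv_eq_ofReal_integral_llr hac.snd_of_prod hC]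

end InformationTheory

lemma KL_eq_klDiv {Z : Type*} [MeasurableSpace Z] (μ ν : Measure Z) [IsProbabilityMeasure μ]
    [IsProbabilityMeasure ν] : KL μ ν = klDiv μ ν := by
  rw [KL, ← llr_def]
  split_ifs with h
  · rw [klDiv_eq_ofReal_integral_llr h.1 h.2, EReal.coe_ennreal_ofReal,
      max_eq_left (integral_llr_nonneg h.1 h.2)]
  · rw [klDiv_eq_top_iff.2 fun hμν hint => h ⟨hμν, hint⟩, EReal.coe_ennreal_top]

theorem KL_prod_decomposition
    {X Y : Type*} [MeasurableSpace X] [MeasurableSpace Y]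
    (γ : Measure (X × Y)) [IsProbabilityMeasure γ]
    (m₁ : Measure X) (m₂ : Measure Y)
    [IsProbabilityMeasure m₁] [IsProbabilityMeasure m₂] :
    KL γ (m₁.prod m₂) =
      KL γ ((γ.map Prod.fst).prod (γ.map Prod.snd))
        + KL (γ.map Prod.fst) m₁ + KL (γ.map Prod.snd) m₂ := by
  change KL γ (m₁.prod m₂) = KL γ (γ.fst.prod γ.snd) + KL γ.fst m₁ + KL γ.snd m₂
  rw [KL_eq_klDiv, KL_eq_klDiv, KL_eq_klDiv, KL_eq_klDiv,
    klDiv_prod_eq_klDiv_prod_fst_snd_add, EReal.coe_ennreal_add, EReal.coe_ennreal_add]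
end
end

section
/- With the notation of the entropic (c,ε)-transform, if u ∈ L_exp^ε(ρ₁) and λ_u := ε log ∫ e^{u/ε} dρ₁, then u^{(c,ε)} ∈ L_exp^ε(ρ₂) and |λ_{u^{(c,ε)}} + λ_u| ≤ ‖c‖_∞. -/
/-!
The log-exponential mean `λ_v = ε log ∫ e^{v/ε}` is monotone in `v` and commutes with adding
constants, hence moves by at most `M` under a perturbation of `v` bounded by `M`. Since
`u^{(c,ε)}(y) = -λ_{u - c(·,y)}`, every value of the transform lies within `‖c‖_∞` of
`-λ_u`; applying the same estimate on `ρ₂` to this perturbation of the constant `-λ_u`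
gives the bound.
-/

open MeasureTheory Real

noncomputable section

/-- The entropic `(c,ε)`-transform of `u`. -/
def transform {X Y : Type*} [MeasurableSpace X] (ρ₁ : Measure X)
    (c : X → Y → ℝ) (ε : ℝ) (u : X → ℝ) : Y → ℝ :=
  fun y => -ε * Real.log (∫ x, Real.exp ((u x - c x y) / ε) ∂ρ₁)

/-- The paper's `λ_v = ε log ∫ e^{v/ε} dμ`. -/
def lambdaExp {α : Type*} [MeasurableSpace α] (μ : Measure α) (ε : ℝ)
    (v : α → ℝ) : ℝ :=
  ε * log (∫ x, exp (v x / ε) ∂μ)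

section LambdaExp

variable {α : Type*} [MeasurableSpace α] {μ : Measure α} {ε : ℝ} {v w : α → ℝ}

lemma lambdaExp_const [IsProbabilityMeasure μ] (hε : ε ≠ 0) (a : ℝ) :
    lambdaExp μ ε (fun _ => a) = a := by
  simp only [lambdaExp, integral_const, probReal_univ, one_smul, log_exp]
  field_simp

lemma lambdaExp_add_const (hε : ε ≠ 0) (h : ∫ x, exp (v x / ε) ∂μ ≠ 0) (a : ℝ) :
    lambdaExp μ ε (fun x => v x + a) = lambdaExp μ ε v + a := by
  simp only [lambdaExp, add_div, exp_add, integral_mul_const, log_mul h (exp_pos _).ne', log_exp]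
  field_simp

lemma lambdaExp_mono (hε : 0 ≤ ε) (hw : Integrable (fun x => exp (w x / ε)) μ)
    (hpos : 0 < ∫ x, exp (v x / ε) ∂μ) (hvw : v ≤ᵐ[μ] w) :
    lambdaExp μ ε v ≤ lambdaExp μ ε w := by
  have hint : ∫ x, exp (v x / ε) ∂μ ≤ ∫ x, exp (w x / ε) ∂μ :=
    integral_mono_of_nonneg (.of_forall fun _ => (exp_pos _).le) hw
      (hvw.mono fun _ h => exp_le_exp.2 (div_le_div_of_nonneg_right h hε))
  exact mul_le_mul_of_nonneg_left (log_le_log hpos hint) hε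

lemma integrable_exp_add_const_div (hv : Integrable (fun x => exp (v x / ε)) μ) (a : ℝ) :
    Integrable (fun x => exp ((v x + a) / ε)) μ := by
  simpa only [add_div, exp_add] using hv.mul_const (exp (a / ε))

variable {M : ℝ}

lemma integrable_exp_add_div_of_abs_le (hε : 0 ≤ ε) (hv : AEMeasurable v μ)
    (hw : AEMeasurable w μ) (hvi : Integrable (fun x => exp (v x / ε)) μ)
    (hwM : ∀ᵐ x ∂μ, |w x| ≤ M) :
    Integrable (fun x => exp ((v x + w x) / ε)) μ := by
  refine (integrable_exp_add_const_div hvi M).mono'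
    ((hv.add hw).div_const ε).exp.aestronglyMeasurable ?_
  filter_upwards [hwM] with x hx
  rw [norm_eq_abs, abs_exp, exp_le_exp]
  exact div_le_div_of_nonneg_right (by linarith [(abs_le.1 hx).2]) hε

lemma abs_lambdaExp_add_sub_le [NeZero μ] (hε : 0 < ε) (hv : AEMeasurable v μ)
    (hw : AEMeasurable w μ) (hvi : Integrable (fun x => exp (v x / ε)) μ)
    (hwM : ∀ᵐ x ∂μ, |w x| ≤ M) :
    |lambdaExp μ ε (fun x => v x + w x) - lambdaExp μ ε v| ≤ M := by
  have hvwi := integrable_exp_add_div_of_abs_le hε.le hv hw hvi hwM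
  have hv0 := (integral_exp_pos hvi).ne'
  have upper : lambdaExp μ ε (fun x => v x + w x) ≤ lambdaExp μ ε v + M := by
    rw [← lambdaExp_add_const hε.ne' hv0]
    refine lambdaExp_mono hε.le (integrable_exp_add_const_div hvi M) (integral_exp_pos hvwi) ?_
    filter_upwards [hwM] with x hx
    linarith [(abs_le.1 hx).2]
  have lower : lambdaExp μ ε v + -M ≤ lambdaExp μ ε (fun x => v x + w x) := by
    rw [← lambdaExp_add_const hε.ne' hv0]
    refine lambdaExp_mono hε.le hvwi (integral_exp_pos (integrable_exp_add_const_div hvi (-M))) ?_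
    filter_upwards [hwM] with x hx
    linarith [(abs_le.1 hx).1]
  rw [abs_le]
  constructor <;> linarith

end LambdaExp

lemma transform_eq_neg_lambdaExp {X Y : Type*} [MeasurableSpace X] (ρ₁ : Measure X)
    (c : X → Y → ℝ) (ε : ℝ) (u : X → ℝ) (y : Y) :
    transform ρ₁ c ε u y = -lambdaExp ρ₁ ε (fun x => u x + -c x y) := by
  simp only [transform, lambdaExp, neg_mul, sub_eq_add_neg]

lemma measurable_transform {X Y : Type*} [MeasurableSpace X] [MeasurableSpace Y]
    (ρ₁ : Measure X) [SFinite ρ₁] {c : X → Y → ℝ} (hc : Measurable (Function.uncurry c))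
    (ε : ℝ) {u : X → ℝ} (hu : Measurable u) :
    Measurable (transform ρ₁ c ε u) := by
  have hjoint : Measurable fun p : Y × X => exp ((u p.2 - c p.2 p.1) / ε) :=
    (((hu.comp measurable_snd).sub (hc.comp measurable_swap)).div_const ε).exp
  exact (hjoint.stronglyMeasurable.integral_prod_right'.measurable.log).const_mul (-ε)

theorem transform_mem_Lexp_and_lambda_bound_general
    {X Y : Type*}
    [MeasurableSpace X]
    [MeasurableSpace Y]
    (ρ₁ : Measure X) [IsProbabilityMeasure ρ₁]
    (ρ₂ : Measure Y) [IsProbabilityMeasure ρ₂]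
    (ε : ℝ) (hε : 0 < ε)
    (c : X → Y → ℝ) (hc : Measurable (Function.uncurry c))
    (M : ℝ) (hM : ∀ x y, |c x y| ≤ M)
    (u : X → ℝ) (hu : Measurable u)
    (hint : Integrable (fun x => Real.exp (u x / ε)) ρ₁) :
    Integrable (fun y => Real.exp (transform ρ₁ c ε u y / ε)) ρ₂ ∧
    0 < ∫ y, Real.exp (transform ρ₁ c ε u y / ε) ∂ρ₂ ∧
    |ε * Real.log (∫ y, Real.exp (transform ρ₁ c ε u y / ε) ∂ρ₂)
        + ε * Real.log (∫ x, Real.exp (u x / ε) ∂ρ₁)| ≤ M := by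
  set T := transform ρ₁ c ε u
  set l := lambdaExp ρ₁ ε u
  have hT : ∀ y, |T y + l| ≤ M := fun y => by
    simp only [T, transform_eq_neg_lambdaExp, neg_add_eq_sub]
    rw [abs_sub_comm]
    exact abs_lambdaExp_add_sub_le (w := fun x => -c x y) hε hu.aemeasurable
      (hc.comp measurable_prodMk_right).neg.aemeasurable hint
      (.of_forall fun x => (abs_neg (c x y)).le.trans (hM x y))
  have hsplit : T = fun y => -l + (T y + l) := by funext y; ring
  have hTm : AEMeasurable (fun y => T y + l) ρ₂ :=
    ((measurable_transform ρ₁ hc ε hu).add_const l).aemeasurable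
  have hconst : Integrable (fun _ : Y => exp (-l / ε)) ρ₂ := integrable_const _
  have hTi : Integrable (fun y => exp (T y / ε)) ρ₂ := by
    rw [hsplit]
    exact integrable_exp_add_div_of_abs_le hε.le aemeasurable_const hTm hconst (.of_forall hT)
  refine ⟨hTi, integral_exp_pos hTi, ?_⟩
  have := abs_lambdaExp_add_sub_le hε aemeasurable_const hTm hconst (.of_forall hT)
  rwa [← hsplit, lambdaExp_const hε.ne', sub_neg_eq_add] at this

theorem transform_mem_Lexp_and_lambda_bound
    {X Y : Type*}
    [MeasurableSpace X] [TopologicalSpace X] [PolishSpace X] [BorelSpace X]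
    [MeasurableSpace Y] [TopologicalSpace Y] [PolishSpace Y] [BorelSpace Y]
    (ρ₁ : Measure X) [IsProbabilityMeasure ρ₁]
    (ρ₂ : Measure Y) [IsProbabilityMeasure ρ₂]
    (ε : ℝ) (hε : 0 < ε)
    (c : X → Y → ℝ) (hc : Measurable (Function.uncurry c))
    (M : ℝ) (hM : ∀ x y, |c x y| ≤ M)
    (u : X → ℝ) (hu : Measurable u)
    (hint : Integrable (fun x => Real.exp (u x / ε)) ρ₁)
    (hpos : 0 < ∫ x, Real.exp (u x / ε) ∂ρ₁) :
    Integrable (fun y => Real.exp (transform ρ₁ c ε u y / ε)) ρ₂ ∧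
    0 < ∫ y, Real.exp (transform ρ₁ c ε u y / ε) ∂ρ₂ ∧
    |ε * Real.log (∫ y, Real.exp (transform ρ₁ c ε u y / ε) ∂ρ₂)
        + ε * Real.log (∫ x, Real.exp (u x / ε) ∂ρ₁)| ≤ M :=
  transform_mem_Lexp_and_lambda_bound_general ρ₁ ρ₂ ε hε c hc M hM u hu hint

end
end

section
/- If c: X×Y → ℝ is L-Lipschitz in y (uniformly in x), then for any u ∈ L_exp^ε(ρ₁), the entropic transform u^{(c,ε)}(y) = -ε log ∫ e^{(u(x)-c(x,y))/ε} dρ₁(x) is L-Lipschitz in y. -/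
open MeasureTheory Real

noncomputable section

/- Log-sum-exp is 1-Lipschitz for the sup norm: shifting the exponent pointwise by at most `K`
multiplies `∫ exp` by at most `exp K`, so its logarithm moves by at most `K`. Since
`(u - c(·, y)) / ε` and `(u - c(·, y')) / ε` differ by at most `L d(y, y') / ε`, the transform,
which is `-ε` times such a logarithm, moves by at most `L d(y, y')`. -/

section LogIntegralExp

variable {X : Type*} [MeasurableSpace X] {μ : Measure X} [NeZero μ] {f g : X → ℝ} {K : ℝ}

theorem log_integral_exp_le_add_of_le_add (hf : Integrable (fun x => exp (f x)) μ)
    (hg : Integrable (fun x => exp (g x)) μ) (hfg : ∀ x, f x ≤ g x + K) :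
    log (∫ x, exp (f x) ∂μ) ≤ log (∫ x, exp (g x) ∂μ) + K :=
  calc log (∫ x, exp (f x) ∂μ)
      ≤ log (∫ x, exp (g x) * exp K ∂μ) := by
        refine log_le_log (integral_exp_pos hf) (integral_mono hf (hg.mul_const _) fun x => ?_)
        simpa only [← exp_add] using exp_le_exp.2 (hfg x)
    _ = log (∫ x, exp (g x) ∂μ) + K := by
        rw [integral_mul_const, log_mul (integral_exp_pos hg).ne' (exp_ne_zero K), log_exp]

theorem abs_log_integral_exp_sub_le (hf : Integrable (fun x => exp (f x)) μ)
    (hg : Integrable (fun x => exp (g x)) μ) (hfg : ∀ x, |f x - g x| ≤ K) :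
    |log (∫ x, exp (f x) ∂μ) - log (∫ x, exp (g x) ∂μ)| ≤ K := by
  have hle := log_integral_exp_le_add_of_le_add hf hg fun x => by
    linarith [(abs_le.1 (hfg x)).2]
  have hge := log_integral_exp_le_add_of_le_add hg hf fun x => by
    linarith [(abs_le.1 (hfg x)).1]
  exact abs_sub_le_iff.2 ⟨by linarith, by linarith⟩

end LogIntegralExp

theorem transform_lipschitz_general
    {X Y : Type*}
    [MeasurableSpace X]
    [MetricSpace Y]
    (ρ₁ : Measure X) [IsProbabilityMeasure ρ₁]
    (ε : ℝ) (hε : 0 < ε)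
    (c : X → Y → ℝ)
    (L : ℝ) (hL : ∀ x y y', |c x y - c x y'| ≤ L * dist y y')
    (u : X → ℝ)
    (hintc : ∀ y, Integrable (fun x => Real.exp ((u x - c x y) / ε)) ρ₁) :
    ∀ y y' : Y, |transform ρ₁ c ε u y - transform ρ₁ c ε u y'| ≤ L * dist y y' := by
  intro y y'
  have hexponent : ∀ x, |(u x - c x y) / ε - (u x - c x y') / ε| ≤ L * dist y y' / ε := by
    intro x
    rw [← sub_div, sub_sub_sub_cancel_left, abs_div, abs_of_pos hε, dist_comm]
    exact div_le_div_of_nonneg_right (hL x y' y) hε.le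
  calc |transform ρ₁ c ε u y - transform ρ₁ c ε u y'|
      = ε * |log (∫ x, exp ((u x - c x y) / ε) ∂ρ₁)
          - log (∫ x, exp ((u x - c x y') / ε) ∂ρ₁)| := by
        rw [transform, transform, ← mul_sub, abs_mul, abs_neg, abs_of_pos hε]
    _ ≤ ε * (L * dist y y' / ε) := mul_le_mul_of_nonneg_left
        (abs_log_integral_exp_sub_le (hintc y) (hintc y') hexponent) hε.le
    _ = L * dist y y' := mul_div_cancel₀ _ hε.ne'

theorem transform_lipschitz
    {X Y : Type*}
    [MeasurableSpace X] [TopologicalSpace X] [PolishSpace X] [BorelSpace X]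
    [MetricSpace Y]
    (ρ₁ : Measure X) [IsProbabilityMeasure ρ₁]
    (ε : ℝ) (hε : 0 < ε)
    (c : X → Y → ℝ) (hcm : ∀ y, Measurable (fun x => c x y))
    (L : ℝ) (hL : ∀ x y y', |c x y - c x y'| ≤ L * dist y y')
    (u : X → ℝ) (hu : Measurable u)
    (hint : Integrable (fun x => Real.exp (u x / ε)) ρ₁)
    (hpos : 0 < ∫ x, Real.exp (u x / ε) ∂ρ₁)
    (hintc : ∀ y, Integrable (fun x => Real.exp ((u x - c x y) / ε)) ρ₁)
    (hposc : ∀ y, 0 < ∫ x, Real.exp ((u x - c x y) / ε) ∂ρ₁) :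
    ∀ y y' : Y, |transform ρ₁ c ε u y - transform ρ₁ c ε u y'| ≤ L * dist y y' :=
  transform_lipschitz_general ρ₁ ε hε c L hL u hintc

end
end

section
/- If c: X×Y → ℝ is ω-continuous in y (uniformly in x) for a modulus of continuity ω, then for any u ∈ L_exp^ε(ρ₁) the entropic transform u^{(c,ε)} is ω-continuous: |u^{(c,ε)}(y₁) - u^{(c,ε)}(y₂)| ≤ ω(d(y₁,y₂)) for all y₁, y₂ ∈ Y. -/
open MeasureTheory Real

noncomputable section

theorem transform_omega_continuous
    {X Y : Type*}
    [MeasurableSpace X] [TopologicalSpace X] [PolishSpace X] [BorelSpace X]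
    [MetricSpace Y]
    (ρ₁ : Measure X) [IsProbabilityMeasure ρ₁]
    (ε : ℝ) (hε : 0 < ε)
    (ω : ℝ → ℝ) (hω_mono : ∀ s t, s ≤ t → ω s ≤ ω t)
    (hω_nonneg : ∀ t, 0 ≤ ω t)
    (hω_lim : Filter.Tendsto ω (nhdsWithin 0 (Set.Ici 0)) (nhds 0))
    (c : X → Y → ℝ) (hcm : ∀ y, Measurable (fun x => c x y))
    (hc : ∀ x y₁ y₂, |c x y₁ - c x y₂| ≤ ω (dist y₁ y₂))
    (u : X → ℝ) (hu : Measurable u)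
    (hint : Integrable (fun x => Real.exp (u x / ε)) ρ₁)
    (hpos : 0 < ∫ x, Real.exp (u x / ε) ∂ρ₁)
    (hintc : ∀ y, Integrable (fun x => Real.exp ((u x - c x y) / ε)) ρ₁)
    (hposc : ∀ y, 0 < ∫ x, Real.exp ((u x - c x y) / ε) ∂ρ₁) :
    ∀ y₁ y₂ : Y,
      |transform ρ₁ c ε u y₁ - transform ρ₁ c ε u y₂| ≤ ω (dist y₁ y₂) := by
  have key : ∀ y₁ y₂ : Y,
      Real.log (∫ x, Real.exp ((u x - c x y₁) / ε) ∂ρ₁)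
        ≤ ω (dist y₁ y₂) / ε + Real.log (∫ x, Real.exp ((u x - c x y₂) / ε) ∂ρ₁) := by
    intro y₁ y₂
    have hmono : (∫ x, Real.exp ((u x - c x y₁) / ε) ∂ρ₁)
        ≤ Real.exp (ω (dist y₁ y₂) / ε) * ∫ x, Real.exp ((u x - c x y₂) / ε) ∂ρ₁ := by
      rw [← integral_const_mul]
      apply integral_mono (hintc y₁) ((hintc y₂).const_mul _)
      intro x
      simp only
      rw [← Real.exp_add]
      apply Real.exp_le_exp.mpr
      rw [← add_div]
      apply div_le_div_of_nonneg_right _ hε.le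
      have := (abs_le.mp (hc x y₂ y₁)).2
      rw [dist_comm] at this
      linarith
    calc Real.log (∫ x, Real.exp ((u x - c x y₁) / ε) ∂ρ₁)
        ≤ Real.log (Real.exp (ω (dist y₁ y₂) / ε) * ∫ x, Real.exp ((u x - c x y₂) / ε) ∂ρ₁) :=
          Real.log_le_log (hposc y₁) hmono
      _ = ω (dist y₁ y₂) / ε + Real.log (∫ x, Real.exp ((u x - c x y₂) / ε) ∂ρ₁) := by
          rw [Real.log_mul (Real.exp_ne_zero _) (ne_of_gt (hposc y₂)), Real.log_exp]
  intro y₁ y₂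
  simp only [transform]
  have h1 := key y₁ y₂
  have h2 := key y₂ y₁
  rw [dist_comm y₂ y₁] at h2
  have e1 : ε * (ω (dist y₁ y₂) / ε) = ω (dist y₁ y₂) := mul_div_cancel₀ _ hε.ne'
  rw [abs_le]
  constructor
  · nlinarith [mul_le_mul_of_nonneg_left h2 hε.le, e1]
  · nlinarith [mul_le_mul_of_nonneg_left h1 hε.le, e1]

end
end

section
/- For c bounded measurable on X×Y, the entropic transform map F^{(c,ε)}: L^∞(ρ₁) → L^∞(ρ₂), u ↦ u^{(c,ε)}, is 1-Lipschitz: ‖F^{(c,ε)}(u) - F^{(c,ε)}(ũ)‖_∞ ≤ ‖u - ũ‖_∞ for all u, ũ ∈ L^∞(ρ₁). -/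
open MeasureTheory Real

noncomputable section

lemma aux_integrable {X Y : Type*} [MeasurableSpace X]
    (ρ₁ : Measure X) [IsProbabilityMeasure ρ₁] (ε : ℝ) (hε : 0 < ε)
    (c : X → Y → ℝ) (hcy : ∀ y, Measurable (fun x => c x y))
    (M : ℝ) (hM : ∀ x y, |c x y| ≤ M)
    (u : X → ℝ) (hu : Measurable u) (Bu : ℝ) (hBu : ∀ x, |u x| ≤ Bu) (y : Y) :
    Integrable (fun x => Real.exp ((u x - c x y) / ε)) ρ₁ := by
  apply Integrable.mono' (integrable_const (Real.exp ((Bu + M) / ε)))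
  · exact ((hu.sub (hcy y)).div_const ε).exp.aestronglyMeasurable
  · refine Filter.Eventually.of_forall fun x => ?_
    rw [Real.norm_eq_abs, abs_of_pos (Real.exp_pos _)]
    apply Real.exp_le_exp.2
    apply (div_le_div_iff_of_pos_right hε).2
    have h1 := abs_le.1 (hBu x)
    have h2 := abs_le.1 (hM x y)
    linarith

theorem transform_one_lipschitz_Linfty
    {X Y : Type*}
    [MeasurableSpace X] [TopologicalSpace X] [PolishSpace X] [BorelSpace X]
    [MeasurableSpace Y] [TopologicalSpace Y] [PolishSpace Y] [BorelSpace Y]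
    (ρ₁ : Measure X) [IsProbabilityMeasure ρ₁]
    (ρ₂ : Measure Y) [IsProbabilityMeasure ρ₂]
    (ε : ℝ) (hε : 0 < ε)
    (c : X → Y → ℝ) (hc : Measurable (Function.uncurry c))
    (M : ℝ) (hM : ∀ x y, |c x y| ≤ M)
    (u v : X → ℝ) (hu : Measurable u) (hv : Measurable v)
    (Bu : ℝ) (hBu : ∀ x, |u x| ≤ Bu) (Bv : ℝ) (hBv : ∀ x, |v x| ≤ Bv)
    (C : ℝ) (hC : ∀ x, |u x - v x| ≤ C) :
    ∀ y : Y, |transform ρ₁ c ε u y - transform ρ₁ c ε v y| ≤ C := by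
  intro y
  have hcy : ∀ y : Y, Measurable (fun x => c x y) := fun y =>
    hc.comp (measurable_id.prodMk measurable_const)
  have hIu : Integrable (fun x => Real.exp ((u x - c x y) / ε)) ρ₁ :=
    aux_integrable ρ₁ ε hε c hcy M hM u hu Bu hBu y
  have hIv : Integrable (fun x => Real.exp ((v x - c x y) / ε)) ρ₁ :=
    aux_integrable ρ₁ ε hε c hcy M hM v hv Bv hBv y
  set Iu := ∫ x, Real.exp ((u x - c x y) / ε) ∂ρ₁ with hIudef
  set Iv := ∫ x, Real.exp ((v x - c x y) / ε) ∂ρ₁ with hIvdef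
  have hIupos : 0 < Iu := integral_exp_pos hIu
  have hIvpos : 0 < Iv := integral_exp_pos hIv
  -- key comparison
  have key : ∀ (f g : X → ℝ), (∀ x, f x - g x ≤ C) →
      Integrable (fun x => Real.exp ((f x - c x y) / ε)) ρ₁ →
      Integrable (fun x => Real.exp ((g x - c x y) / ε)) ρ₁ →
      (∫ x, Real.exp ((f x - c x y) / ε) ∂ρ₁) ≤
        Real.exp (C / ε) * ∫ x, Real.exp ((g x - c x y) / ε) ∂ρ₁ := by
    intro f g hfg hf hg
    rw [← integral_const_mul]
    apply integral_mono hf (hg.const_mul _)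
    intro x
    dsimp only
    rw [← Real.exp_add]
    apply Real.exp_le_exp.2
    rw [← add_div]
    apply (div_le_div_iff_of_pos_right hε).2
    linarith [hfg x]
  have h1 : Iu ≤ Real.exp (C / ε) * Iv :=
    key u v (fun x => (abs_le.1 (hC x)).2) hIu hIv
  have h2 : Iv ≤ Real.exp (C / ε) * Iu :=
    key v u (fun x => by linarith [(abs_le.1 (hC x)).1]) hIv hIu
  have hlog1 : Real.log Iu - Real.log Iv ≤ C / ε := by
    have := Real.log_le_log hIupos h1
    rwa [Real.log_mul (Real.exp_ne_zero _) (ne_of_gt hIvpos), Real.log_exp,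
      ← sub_le_iff_le_add] at this
  have hlog2 : Real.log Iv - Real.log Iu ≤ C / ε := by
    have := Real.log_le_log hIvpos h2
    rwa [Real.log_mul (Real.exp_ne_zero _) (ne_of_gt hIupos), Real.log_exp,
      ← sub_le_iff_le_add] at this
  have habs : |Real.log Iu - Real.log Iv| ≤ C / ε := by
    rw [abs_le]; constructor <;> linarith
  have heq : transform ρ₁ c ε u y - transform ρ₁ c ε v y
      = ε * (Real.log Iv - Real.log Iu) := by
    simp only [transform, ← hIudef, ← hIvdef]
    ring
  rw [heq, abs_mul, abs_of_pos hε, abs_sub_comm]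
  calc ε * |Real.log Iu - Real.log Iv| ≤ ε * (C / ε) :=
        mul_le_mul_of_nonneg_left habs hε.le
    _ = C := by field_simp
end
end

section
/- Suppose Y is a geodesic metric space and c(x,·) is K-concave along geodesics uniformly in x, i.e. c(x,y_t) ≥ (1-t)c(x,y₀) + t c(x,y₁) + 2t(1-t)K d²(y₀,y₁) for every constant-speed geodesic (y_t) and all x. Then for any u ∈ L_exp^ε(ρ₁), the entropic transform u^{(c,ε)} is K-concave: u^{(c,ε)}(y_t) ≥ (1-t)u^{(c,ε)}(y₀) + t u^{(c,ε)}(y₁) + 2t(1-t)K d²(y₀,y₁). -/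
/-!
By `K`-concavity of `c`, the integrand `exp ((u - c(·, y_t)) / ε)` is pointwise at most
`exp (-2t(1-t)K d²(y₀,y₁) / ε)` times the interpolation `f₀ ^ (1-t) * f₁ ^ t` of the endpoint
integrands. Hölder's inequality with exponents `1/(1-t)` and `1/t` bounds the integral of the
interpolation by `(∫ f₀) ^ (1-t) * (∫ f₁) ^ t`, i.e. `log ∫ exp` is convex along the path, and
applying the decreasing map `-ε log` turns this into the concavity inequality.
-/

open MeasureTheory Real

noncomputable section

namespace MeasureTheory

variable {α : Type*} [MeasurableSpace α] {μ : Measure α} {f g : α → ℝ} {p q : ℝ}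

theorem Integrable.rpow_mul_rpow (hf : Integrable f μ) (hg : Integrable g μ)
    (hf₀ : 0 ≤ᵐ[μ] f) (hg₀ : 0 ≤ᵐ[μ] g) (hp : 0 ≤ p) (hq : 0 ≤ q) (hpq : p + q = 1) :
    Integrable (fun x => f x ^ p * g x ^ q) μ := by
  refine ((hf.const_mul p).add (hg.const_mul q)).mono'
    ((hf.aemeasurable.pow_const p).mul (hg.aemeasurable.pow_const q)).aestronglyMeasurable ?_
  filter_upwards [hf₀, hg₀] with x hfx hgx
  rw [Real.norm_of_nonneg (mul_nonneg (rpow_nonneg hfx p) (rpow_nonneg hgx q))]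
  exact geom_mean_le_arith_mean2_weighted hp hq hfx hgx hpq

theorem integral_rpow_mul_rpow_le (hf : Integrable f μ) (hg : Integrable g μ)
    (hf₀ : 0 ≤ᵐ[μ] f) (hg₀ : 0 ≤ᵐ[μ] g) (hp : 0 ≤ p) (hq : 0 ≤ q) (hpq : p + q = 1) :
    ∫ x, f x ^ p * g x ^ q ∂μ ≤ (∫ x, f x ∂μ) ^ p * (∫ x, g x ∂μ) ^ q := by
  have hf₁ := integral_nonneg_of_ae hf₀
  have hg₁ := integral_nonneg_of_ae hg₀
  have h_ofReal : (fun x => ENNReal.ofReal (f x ^ p * g x ^ q)) =ᵐ[μ]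
      fun x => ENNReal.ofReal (f x) ^ p * ENNReal.ofReal (g x) ^ q := by
    filter_upwards [hf₀, hg₀] with x hfx hgx
    rw [ENNReal.ofReal_mul (rpow_nonneg hfx p), ENNReal.ofReal_rpow_of_nonneg hfx hp,
      ENNReal.ofReal_rpow_of_nonneg hgx hq]
  rw [← ENNReal.ofReal_le_ofReal_iff (mul_nonneg (rpow_nonneg hf₁ p) (rpow_nonneg hg₁ q)),
    ofReal_integral_eq_lintegral_ofReal (hf.rpow_mul_rpow hg hf₀ hg₀ hp hq hpq)
      (by filter_upwards [hf₀, hg₀] with x hfx hgx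
          exact mul_nonneg (rpow_nonneg hfx p) (rpow_nonneg hgx q)),
    lintegral_congr_ae h_ofReal, ENNReal.ofReal_mul (by positivity),
    ← ENNReal.ofReal_rpow_of_nonneg hf₁ hp, ← ENNReal.ofReal_rpow_of_nonneg hg₁ hq,
    ofReal_integral_eq_lintegral_ofReal hf hf₀, ofReal_integral_eq_lintegral_ofReal hg hg₀]
  exact ENNReal.lintegral_mul_norm_pow_le hf.aemeasurable.ennreal_ofReal
    hg.aemeasurable.ennreal_ofReal hp hq hpq

theorem log_integral_exp_le [NeZero μ] {f₀ f₁ : α → ℝ} {t a : ℝ}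
    (hf : Integrable (fun x => exp (f x)) μ) (hf₀ : Integrable (fun x => exp (f₀ x)) μ)
    (hf₁ : Integrable (fun x => exp (f₁ x)) μ) (ht₀ : 0 ≤ t) (ht₁ : t ≤ 1)
    (hle : ∀ᵐ x ∂μ, f x ≤ (1 - t) * f₀ x + t * f₁ x + a) :
    log (∫ x, exp (f x) ∂μ) ≤
      (1 - t) * log (∫ x, exp (f₀ x) ∂μ) + t * log (∫ x, exp (f₁ x) ∂μ) + a := by
  have hI₀ := integral_exp_pos hf₀
  have hI₁ := integral_exp_pos hf₁
  have hexp : ∀ x, exp ((1 - t) * f₀ x + t * f₁ x + a) =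
      exp a * (exp (f₀ x) ^ (1 - t) * exp (f₁ x) ^ t) := by
    intro x
    rw [← exp_mul, ← exp_mul, ← exp_add, ← exp_add]
    ring_nf
  have hprod := hf₀.rpow_mul_rpow hf₁ (.of_forall fun x => (exp_pos _).le)
    (.of_forall fun x => (exp_pos _).le) (sub_nonneg.2 ht₁) ht₀ (sub_add_cancel 1 t)
  have hbound : ∫ x, exp (f x) ∂μ ≤ exp a * ((∫ x, exp (f₀ x) ∂μ) ^ (1 - t) *
      (∫ x, exp (f₁ x) ∂μ) ^ t) := calc
    ∫ x, exp (f x) ∂μ ≤ ∫ x, exp a * (exp (f₀ x) ^ (1 - t) * exp (f₁ x) ^ t) ∂μ := by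
      refine integral_mono_of_nonneg (.of_forall fun x => (exp_pos _).le)
        (hprod.const_mul _) ?_
      filter_upwards [hle] with x hx
      rw [← hexp]
      exact exp_le_exp.2 hx
    _ = exp a * ∫ x, exp (f₀ x) ^ (1 - t) * exp (f₁ x) ^ t ∂μ := integral_const_mul _ _
    _ ≤ _ := by
      gcongr
      exact integral_rpow_mul_rpow_le hf₀ hf₁ (.of_forall fun x => (exp_pos _).le)
        (.of_forall fun x => (exp_pos _).le) (sub_nonneg.2 ht₁) ht₀ (sub_add_cancel 1 t)
  calc log (∫ x, exp (f x) ∂μ)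
      ≤ log (exp a * ((∫ x, exp (f₀ x) ∂μ) ^ (1 - t) * (∫ x, exp (f₁ x) ∂μ) ^ t)) :=
        log_le_log (integral_exp_pos hf) hbound
    _ = _ := by
      rw [log_mul (exp_pos _).ne' (by positivity), log_exp,
        log_mul (by positivity) (by positivity), log_rpow hI₀, log_rpow hI₁]
      ring

end MeasureTheory

theorem transform_K_concave_general
    {X Y : Type*}
    [MeasurableSpace X]
    [MetricSpace Y]
    (ρ₁ : Measure X) [IsProbabilityMeasure ρ₁]
    (ε : ℝ) (hε : 0 < ε)
    (c : X → Y → ℝ)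
    (u : X → ℝ)
    (hintc : ∀ y, Integrable (fun x => Real.exp ((u x - c x y) / ε)) ρ₁)
    (K : ℝ) (g : ℝ → Y)
    (hconc : ∀ (x : X) (t : ℝ), t ∈ Set.Icc (0:ℝ) 1 →
      c x (g t) ≥ (1 - t) * c x (g 0) + t * c x (g 1)
        + 2 * t * (1 - t) * K * dist (g 0) (g 1) ^ 2) :
    ∀ t : ℝ, t ∈ Set.Icc (0:ℝ) 1 →
      transform ρ₁ c ε u (g t)
        ≥ (1 - t) * transform ρ₁ c ε u (g 0) + t * transform ρ₁ c ε u (g 1)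
          + 2 * t * (1 - t) * K * dist (g 0) (g 1) ^ 2 := by
  intro t ht
  set R := 2 * t * (1 - t) * K * dist (g 0) (g 1) ^ 2
  have hlog := log_integral_exp_le (a := -R / ε) (hintc (g t)) (hintc (g 0)) (hintc (g 1))
    ht.1 ht.2 <| .of_forall fun x => by
      field_simp
      linarith [hconc x t ht]
  have := mul_le_mul_of_nonneg_left hlog hε.le
  simp only [transform, ge_iff_le]
  field_simp at this
  linarith

/-- If `c(x, ·)` is `K`-concave along a constant-speed geodesic, uniformly in `x`, then
the entropic `(c,ε)`-transform is `K`-concave along that geodesic. -/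
theorem transform_K_concave
    {X Y : Type*}
    [MeasurableSpace X] [TopologicalSpace X] [PolishSpace X] [BorelSpace X]
    [MetricSpace Y]
    (ρ₁ : Measure X) [IsProbabilityMeasure ρ₁]
    (ε : ℝ) (hε : 0 < ε)
    (c : X → Y → ℝ) (hcm : ∀ y, Measurable (fun x => c x y))
    (u : X → ℝ) (hu : Measurable u)
    (hintc : ∀ y, Integrable (fun x => Real.exp ((u x - c x y) / ε)) ρ₁)
    (hposc : ∀ y, 0 < ∫ x, Real.exp ((u x - c x y) / ε) ∂ρ₁)
    (K : ℝ) (g : ℝ → Y)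
    (hg : ∀ s t : ℝ, s ∈ Set.Icc (0:ℝ) 1 → t ∈ Set.Icc (0:ℝ) 1 →
      dist (g s) (g t) = |s - t| * dist (g 0) (g 1))
    (hconc : ∀ (x : X) (t : ℝ), t ∈ Set.Icc (0:ℝ) 1 →
      c x (g t) ≥ (1 - t) * c x (g 0) + t * c x (g 1)
        + 2 * t * (1 - t) * K * dist (g 0) (g 1) ^ 2) :
    ∀ t : ℝ, t ∈ Set.Icc (0:ℝ) 1 →
      transform ρ₁ c ε u (g t)
        ≥ (1 - t) * transform ρ₁ c ε u (g 0) + t * transform ρ₁ c ε u (g 1)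
          + 2 * t * (1 - t) * K * dist (g 0) (g 1) ^ 2 :=
  transform_K_concave_general ρ₁ ε hε c u hintc K g hconc
end
end

section
/- Let D_ε(u,v) = ∫_X u dρ₁ + ∫_Y v dρ₂ - ε ∫_{X×Y} e^{(u(x)+v(y)-c(x,y))/ε} d(ρ₁⊗ρ₂). For every u ∈ L_exp^ε(ρ₁) and v ∈ L_exp^ε(ρ₂), D_ε(u, u^{(c,ε)}) ≥ D_ε(u, v), with equality if and only if v = u^{(c,ε)} (ρ₂-a.e.). -/
open MeasureTheory Real

noncomputable section

lemma key_le {ε t s : ℝ} (hε : 0 < ε) :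
    t - ε * Real.exp ((t - s) / ε) ≤ s - ε := by
  have h1 : (t - s) / ε + 1 ≤ Real.exp ((t - s) / ε) := Real.add_one_le_exp _
  have h2 : ε * ((t - s) / ε) = t - s := by field_simp
  nlinarith

lemma key_eq_iff {ε t s : ℝ} (hε : 0 < ε) :
    t - ε * Real.exp ((t - s) / ε) = s - ε ↔ t = s := by
  constructor
  · intro h
    by_contra hne
    have hts : (t - s) / ε ≠ 0 := div_ne_zero (sub_ne_zero.2 hne) hε.ne'
    have h1 : (t - s) / ε + 1 < Real.exp ((t - s) / ε) := Real.add_one_lt_exp hts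
    have h2 : ε * ((t - s) / ε) = t - s := by field_simp
    nlinarith
  · rintro rfl
    simp

/-- The dual Entropy–Kantorovich functional. -/
def Dfun {X Y : Type*} [MeasurableSpace X] [MeasurableSpace Y]
    (ρ₁ : Measure X) (ρ₂ : Measure Y) (c : X → Y → ℝ) (ε : ℝ)
    (u : X → ℝ) (v : Y → ℝ) : ℝ :=
  (∫ x, u x ∂ρ₁) + (∫ y, v y ∂ρ₂)
    - ε * ∫ p, Real.exp ((u p.1 + v p.2 - c p.1 p.2) / ε) ∂(ρ₁.prod ρ₂)

theorem Dfun_transform_max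
    {X Y : Type*}
    [MeasurableSpace X] [TopologicalSpace X] [PolishSpace X] [BorelSpace X]
    [MeasurableSpace Y] [TopologicalSpace Y] [PolishSpace Y] [BorelSpace Y]
    (ρ₁ : Measure X) [IsProbabilityMeasure ρ₁]
    (ρ₂ : Measure Y) [IsProbabilityMeasure ρ₂]
    (ε : ℝ) (hε : 0 < ε)
    (c : X → Y → ℝ) (hc : Measurable (Function.uncurry c))
    (M : ℝ) (hM : ∀ x y, |c x y| ≤ M)
    (u : X → ℝ) (hu : Measurable u) (hu1 : Integrable u ρ₁)
    (huexp : Integrable (fun x => Real.exp (u x / ε)) ρ₁)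
    (hupos : 0 < ∫ x, Real.exp (u x / ε) ∂ρ₁)
    (v : Y → ℝ) (hv : Measurable v) (hv1 : Integrable v ρ₂)
    (hvexp : Integrable (fun y => Real.exp (v y / ε)) ρ₂)
    (hvpos : 0 < ∫ y, Real.exp (v y / ε) ∂ρ₂) :
    Dfun ρ₁ ρ₂ c ε u v ≤ Dfun ρ₁ ρ₂ c ε u (transform ρ₁ c ε u) ∧
    (Dfun ρ₁ ρ₂ c ε u v = Dfun ρ₁ ρ₂ c ε u (transform ρ₁ c ε u)
      ↔ v =ᵐ[ρ₂] transform ρ₁ c ε u) := by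
  have hεne : ε ≠ 0 := ne_of_gt hε
  set M' : ℝ := |M| with hM'def
  have hM' : ∀ x y, |c x y| ≤ M' := fun x y => (hM x y).trans (le_abs_self M)
  set I : ℝ := ∫ x, Real.exp (u x / ε) ∂ρ₁ with hIdef
  set F : Y → ℝ := fun y => ∫ x, Real.exp ((u x - c x y) / ε) ∂ρ₁ with hFdef
  set a : Y → ℝ := transform ρ₁ c ε u with hadef
  have haeq : ∀ y, a y = -ε * Real.log (F y) := fun y => rfl
  have hc' : Measurable fun p : X × Y => c p.1 p.2 := hc
  -- measurability of the inner integrand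
  have hcy : ∀ y, Measurable fun x => c x y := fun y =>
    hc'.comp (measurable_id.prodMk measurable_const)
  have hmg : ∀ y, Measurable fun x => Real.exp ((u x - c x y) / ε) := fun y =>
    ((hu.sub (hcy y)).div_const ε).exp

  -- integrability of the inner integrand
  have hintg : ∀ y, Integrable (fun x => Real.exp ((u x - c x y) / ε)) ρ₁ := by
    intro y
    refine (huexp.const_mul (Real.exp (M' / ε))).mono' (hmg y).aestronglyMeasurable ?_
    filter_upwards with x
    rw [Real.norm_eq_abs, abs_of_pos (Real.exp_pos _), ← Real.exp_add, ← add_div]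
    apply Real.exp_le_exp.2
    gcongr
    linarith [(abs_le.1 (hM' x y)).1]
  -- lower bound for F
  have hlow : ∀ x, Real.exp (-M' / ε) * Real.exp (u x / ε) = Real.exp ((u x - M') / ε) := by
    intro x; rw [← Real.exp_add, ← add_div]; ring_nf
  have hFlb : ∀ y, Real.exp (-M' / ε) * I ≤ F y := by
    intro y
    rw [hIdef, ← integral_const_mul]
    refine integral_mono ?_ (hintg y) ?_
    · simpa [hlow] using huexp.const_mul (Real.exp (-M' / ε))
    · intro x
      show Real.exp (-M' / ε) * Real.exp (u x / ε) ≤ Real.exp ((u x - c x y) / ε)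
      rw [hlow x]
      apply Real.exp_le_exp.2
      gcongr
      linarith [(abs_le.1 (hM' x y)).2]
  have hupp : ∀ x, Real.exp (M' / ε) * Real.exp (u x / ε) = Real.exp ((u x + M') / ε) := by
    intro x; rw [← Real.exp_add, ← add_div]; ring_nf
  have hFub : ∀ y, F y ≤ Real.exp (M' / ε) * I := by
    intro y
    rw [hIdef, ← integral_const_mul]
    refine integral_mono (hintg y) ?_ ?_
    · simpa [hupp] using huexp.const_mul (Real.exp (M' / ε))
    · intro x
      show Real.exp ((u x - c x y) / ε) ≤ Real.exp (M' / ε) * Real.exp (u x / ε)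
      rw [hupp x]
      apply Real.exp_le_exp.2
      gcongr
      linarith [(abs_le.1 (hM' x y)).1]
  have hFpos : ∀ y, 0 < F y := fun y =>
    lt_of_lt_of_le (by positivity) (hFlb y)
  -- measurability of F
  have hFm : Measurable F := by
    have hsm : StronglyMeasurable fun p : X × Y => Real.exp ((u p.1 - c p.1 p.2) / ε) :=
      ((((hu.comp measurable_fst).sub hc').div_const ε).exp).stronglyMeasurable
    exact hsm.integral_prod_left'.measurable
  have ham : Measurable a := (hFm.log).const_mul (-ε)
  -- boundedness of a
  set B : ℝ := ε * (M' / ε + |Real.log I|) with hBdef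
  have haB : ∀ y, ‖a y‖ ≤ B := by
    intro y
    have h1 : Real.log (F y) ≤ M' / ε + Real.log I := by
      calc Real.log (F y) ≤ Real.log (Real.exp (M' / ε) * I) :=
            Real.log_le_log (hFpos y) (hFub y)
        _ = M' / ε + Real.log I := by rw [Real.log_mul (Real.exp_ne_zero _) hupos.ne', Real.log_exp]
    have h2 : -(M' / ε) + Real.log I ≤ Real.log (F y) := by
      calc -(M' / ε) + Real.log I = Real.log (Real.exp (-M' / ε) * I) := by
            rw [Real.log_mul (Real.exp_ne_zero _) hupos.ne', Real.log_exp, neg_div]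
        _ ≤ Real.log (F y) := Real.log_le_log (by positivity) (hFlb y)
    have hM0 : 0 ≤ M' := abs_nonneg M
    have h3 : |Real.log (F y)| ≤ M' / ε + |Real.log I| := by
      rw [abs_le]
      constructor
      · have := neg_abs_le (Real.log I)
        linarith
      · have := le_abs_self (Real.log I)
        linarith
    rw [haeq, Real.norm_eq_abs, abs_mul, abs_neg, abs_of_pos hε, hBdef]
    have hB2 : 0 ≤ M' / ε + |Real.log I| := by positivity
    exact mul_le_mul_of_nonneg_left h3 hε.le
  have haint : Integrable a ρ₂ :=
    (integrable_const B).mono' ham.aestronglyMeasurable (Filter.Eventually.of_forall haB)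
  -- exp (a y / ε) = (F y)⁻¹
  have hexpa : ∀ y, Real.exp (a y / ε) = (F y)⁻¹ := by
    intro y
    rw [haeq]
    have : -ε * Real.log (F y) / ε = -Real.log (F y) := by
      field_simp
    rw [this, Real.exp_neg, Real.exp_log (hFpos y)]
  have haexp : Integrable (fun y => Real.exp (a y / ε)) ρ₂ := by
    refine (integrable_const (Real.exp (-M' / ε) * I)⁻¹).mono'
      ((ham.div_const ε).exp).aestronglyMeasurable ?_
    filter_upwards with y
    rw [Real.norm_eq_abs, abs_of_pos (Real.exp_pos _), hexpa y]
    exact inv_anti₀ (by positivity) (hFlb y)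
  -- Fubini representation
  have hDrep : ∀ w : Y → ℝ, Measurable w → Integrable (fun y => Real.exp (w y / ε)) ρ₂ →
      (∫ p, Real.exp ((u p.1 + w p.2 - c p.1 p.2) / ε) ∂(ρ₁.prod ρ₂))
        = ∫ y, Real.exp (w y / ε) * F y ∂ρ₂ := by
    intro w hw hwexp
    have hfm : Measurable fun p : X × Y => Real.exp ((u p.1 + w p.2 - c p.1 p.2) / ε) :=
      ((((hu.comp measurable_fst).add (hw.comp measurable_snd)).sub hc').div_const ε).exp
    have hfint : Integrable (fun p : X × Y => Real.exp ((u p.1 + w p.2 - c p.1 p.2) / ε))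
        (ρ₁.prod ρ₂) := by
      have hbig : Integrable
          (fun p : X × Y => Real.exp (M' / ε) * (Real.exp (u p.1 / ε) * Real.exp (w p.2 / ε)))
          (ρ₁.prod ρ₂) := (huexp.mul_prod hwexp).const_mul _
      refine hbig.mono' hfm.aestronglyMeasurable ?_
      filter_upwards with p
      rw [Real.norm_eq_abs, abs_of_pos (Real.exp_pos _), ← Real.exp_add, ← Real.exp_add,
        ← add_div, ← add_div]
      apply Real.exp_le_exp.2
      gcongr
      linarith [(abs_le.1 (hM' p.1 p.2)).1]
    rw [MeasureTheory.integral_prod_symm _ hfint]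
    refine integral_congr_ae (Filter.Eventually.of_forall fun y => ?_)
    show (∫ x, Real.exp ((u x + w y - c x y) / ε) ∂ρ₁) = Real.exp (w y / ε) * F y
    rw [← integral_const_mul]
    refine integral_congr_ae (Filter.Eventually.of_forall fun x => ?_)
    show Real.exp ((u x + w y - c x y) / ε)
        = Real.exp (w y / ε) * Real.exp ((u x - c x y) / ε)
    rw [← Real.exp_add, ← add_div]
    ring_nf
  -- the two values of Dfun
  have hDv : Dfun ρ₁ ρ₂ c ε u v
      = (∫ x, u x ∂ρ₁) + (∫ y, v y ∂ρ₂) - ε * ∫ y, Real.exp (v y / ε) * F y ∂ρ₂ := by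
    rw [Dfun, hDrep v hv hvexp]
  have hGa : ∀ y, Real.exp (a y / ε) * F y = 1 := by
    intro y; rw [hexpa y, inv_mul_cancel₀ (hFpos y).ne']
  have hDa : Dfun ρ₁ ρ₂ c ε u a
      = (∫ x, u x ∂ρ₁) + (∫ y, a y ∂ρ₂) - ε := by
    rw [Dfun, hDrep a ham haexp]
    simp [hGa]
  -- integrability of G := exp(v/ε) * F
  have hGm : Measurable fun y => Real.exp (v y / ε) * F y :=
    ((hv.div_const ε).exp).mul hFm
  have hGint : Integrable (fun y => Real.exp (v y / ε) * F y) ρ₂ := by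
    refine (hvexp.const_mul (Real.exp (M' / ε) * I)).mono' hGm.aestronglyMeasurable ?_
    filter_upwards with y
    rw [Real.norm_eq_abs, abs_of_pos (mul_pos (Real.exp_pos _) (hFpos y))]
    calc Real.exp (v y / ε) * F y ≤ Real.exp (v y / ε) * (Real.exp (M' / ε) * I) :=
          mul_le_mul_of_nonneg_left (hFub y) (Real.exp_pos _).le
      _ = Real.exp (M' / ε) * I * Real.exp (v y / ε) := by ring
  -- pointwise key inequality
  have hFa : ∀ y, Real.exp (v y / ε) * F y = Real.exp ((v y - a y) / ε) := by
    intro y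
    have : F y = Real.exp (-(a y) / ε) := by
      rw [neg_div, Real.exp_neg, hexpa y, inv_inv]
    rw [this, ← Real.exp_add, ← add_div]
    ring_nf
  have hkey_le : ∀ y, v y - ε * (Real.exp (v y / ε) * F y) ≤ a y - ε := by
    intro y; rw [hFa y]; exact key_le hε
  have hkey_iff : ∀ y, v y - ε * (Real.exp (v y / ε) * F y) = a y - ε ↔ v y = a y := by
    intro y; rw [hFa y]; exact key_eq_iff hε
  -- the gap function
  set h : Y → ℝ := fun y => (a y - ε) - (v y - ε * (Real.exp (v y / ε) * F y)) with hhdef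
  have hh0 : ∀ y, 0 ≤ h y := fun y => sub_nonneg.2 (hkey_le y)
  have hhint : Integrable h ρ₂ :=
    ((haint.sub (integrable_const ε)).sub (hv1.sub (hGint.const_mul ε)))
  have hhintegral : ∫ y, h y ∂ρ₂
      = ((∫ y, a y ∂ρ₂) - ε) - ((∫ y, v y ∂ρ₂) - ε * ∫ y, Real.exp (v y / ε) * F y ∂ρ₂) := by
    have i1 : Integrable (fun y => a y - ε) ρ₂ := haint.sub (integrable_const ε)
    have i2 : Integrable (fun y => v y - ε * (Real.exp (v y / ε) * F y)) ρ₂ :=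
      hv1.sub (hGint.const_mul ε)
    have e0 : ∫ y, h y ∂ρ₂
        = ∫ y, ((fun y => a y - ε) y - (fun y => v y - ε * (Real.exp (v y / ε) * F y)) y) ∂ρ₂ :=
      rfl
    rw [e0, integral_sub i1 i2]
    have e1 : ∫ y, (fun y => a y - ε) y ∂ρ₂ = (∫ y, a y ∂ρ₂) - ε := by
      rw [integral_sub haint (integrable_const ε), integral_const]
      simp
    have e2 : ∫ y, (fun y => v y - ε * (Real.exp (v y / ε) * F y)) y ∂ρ₂
        = (∫ y, v y ∂ρ₂) - ε * ∫ y, Real.exp (v y / ε) * F y ∂ρ₂ := by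
      rw [integral_sub hv1 (hGint.const_mul ε), integral_const_mul]
    rw [e1, e2]
  have hDdiff : Dfun ρ₁ ρ₂ c ε u a - Dfun ρ₁ ρ₂ c ε u v = ∫ y, h y ∂ρ₂ := by
    rw [hDv, hDa, hhintegral]; ring
  constructor
  · have : 0 ≤ ∫ y, h y ∂ρ₂ := integral_nonneg hh0
    linarith [hDdiff]
  · constructor
    · intro heq
      have hint0 : ∫ y, h y ∂ρ₂ = 0 := by linarith [hDdiff]
      have hae : h =ᵐ[ρ₂] 0 :=
        (integral_eq_zero_iff_of_nonneg hh0 hhint).1 hint0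
      filter_upwards [hae] with y hy
      have : v y - ε * (Real.exp (v y / ε) * F y) = a y - ε := by
        have : h y = 0 := hy
        rw [hhdef] at this
        linarith [this]
      exact (hkey_iff y).1 this
    · intro hae
      have h1 : ∫ y, v y ∂ρ₂ = ∫ y, a y ∂ρ₂ := integral_congr_ae hae
      have h2 : ∫ y, Real.exp (v y / ε) * F y ∂ρ₂ = 1 := by
        have : (fun y => Real.exp (v y / ε) * F y) =ᵐ[ρ₂] fun _ => 1 := by
          filter_upwards [hae] with y hy
          rw [hy, hGa y]
        rw [integral_congr_ae this]
        simp
      rw [hDv, hDa, h1, h2, mul_one]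

end
end

section
/- For any u ∈ L_exp^ε(ρ₁) and v ∈ L_exp^ε(ρ₂), there exist u* ∈ L^∞(ρ₁) and v* ∈ L^∞(ρ₂) with D_ε(u,v) ≤ D_ε(u*,v*), ‖u*‖_∞ ≤ (3/2)‖c‖_∞ and ‖v*‖_∞ ≤ (3/2)‖c‖_∞. One may take u* = (v+a)^{(c,ε)} and v* = (u*)^{(c,ε)} for suitable a ∈ ℝ. -/
open MeasureTheory Real

noncomputable section

/-- The entropic `(c,ε)`-transform of `v : Y → ℝ`, a function on `X`. -/
def transformY {X Y : Type*} [MeasurableSpace Y] (ρ₂ : Measure Y)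
    (c : X → Y → ℝ) (ε : ℝ) (v : Y → ℝ) : X → ℝ :=
  fun x => -ε * Real.log (∫ y, Real.exp ((v y - c x y) / ε) ∂ρ₂)

/-! `transformY ρ₂ c ε g x` is minus the soft maximum `ε log ∫ e^{(g - c x ·)/ε} dρ₂`. Since the soft
maximum is monotone and commutes with adding constants, `|g^{(c,ε)} + ε log ∫ e^{g/ε}| ≤ M`.
Computing the inner integral of `D_ε(f, g)` by Fubini and using `e^t ≥ 1 + t` pointwise shows that
replacing `f` by `g^{(c,ε)}` (and symmetrically `g` by `f^{(c,ε)}`) does not decrease `D_ε`, while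
`D_ε(u - a, v + a) = D_ε(u, v)`. Starting from `φ := v^{(c,ε)} + ε log ∫ e^{v/ε}`, which is bounded
by `M`, its soft maximum `L` is bounded by `M` as well; the shift `a` is chosen so that
`u* = φ - L/2`, whose soft maximum is `L/2`, so `u*` and `v* = (u*)^{(c,ε)}` are both bounded by
`M + |L|/2 ≤ 3M/2`. -/

def logIntegralExp {Z : Type*} [MeasurableSpace Z] (ρ : Measure Z) (ε : ℝ) (g : Z → ℝ) : ℝ :=
  ε * log (∫ z, exp (g z / ε) ∂ρ)

theorem sub_mul_exp_sub_div_le {ε : ℝ} (hε : 0 < ε) (s t : ℝ) :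
    s - ε * exp ((s - t) / ε) ≤ t - ε := by
  have h := mul_le_mul_of_nonneg_left (add_one_le_exp ((s - t) / ε)) hε.le
  rw [mul_add, mul_div_cancel₀ _ hε.ne'] at h
  linarith

theorem abs_le_abs_add_add_abs (a b : ℝ) : |a| ≤ |a + b| + |b| := by
  simpa only [add_sub_cancel_right] using abs_sub (a + b) b

section LogIntegralExp

variable {Z : Type*} [MeasurableSpace Z] {ρ : Measure Z} {ε M : ℝ} {g g₁ g₂ : Z → ℝ}

theorem MeasureTheory.Integrable.exp_add_const_div (h : Integrable (fun z => exp (g z / ε)) ρ)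
    (t : ℝ) : Integrable (fun z => exp ((g z + t) / ε)) ρ := by
  simpa only [add_div, exp_add] using h.mul_const (exp (t / ε))

theorem integrable_exp_div_of_le (hε : 0 < ε) (hg₁ : Measurable g₁) (hle : ∀ z, g₁ z ≤ g₂ z)
    (h₂ : Integrable (fun z => exp (g₂ z / ε)) ρ) : Integrable (fun z => exp (g₁ z / ε)) ρ :=
  h₂.mono' (hg₁.div_const ε).exp.aestronglyMeasurable <| .of_forall fun z => by
    rw [norm_of_nonneg (exp_pos _).le]
    exact exp_le_exp.2 (div_le_div_of_nonneg_right (hle z) hε.le)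

theorem integrable_exp_div_of_abs_le [IsFiniteMeasure ρ] (hε : 0 < ε) (hg : Measurable g)
    (hM : ∀ z, |g z| ≤ M) : Integrable (fun z => exp (g z / ε)) ρ :=
  integrable_exp_div_of_le (g₂ := fun _ => M) hε hg (fun z => (abs_le.1 (hM z)).2)
    (integrable_const _)

theorem logIntegralExp_add_const [NeZero ρ] (hε : ε ≠ 0)
    (h : Integrable (fun z => exp (g z / ε)) ρ) (t : ℝ) :
    logIntegralExp ρ ε (fun z => g z + t) = logIntegralExp ρ ε g + t := by
  simp only [logIntegralExp, add_div, exp_add, integral_mul_const]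
  rw [log_mul (integral_exp_pos h).ne' (exp_pos _).ne', log_exp, mul_add, mul_div_cancel₀ _ hε]

theorem logIntegralExp_mono [NeZero ρ] (hε : 0 < ε) (h₁ : Integrable (fun z => exp (g₁ z / ε)) ρ)
    (h₂ : Integrable (fun z => exp (g₂ z / ε)) ρ) (hle : ∀ z, g₁ z ≤ g₂ z) :
    logIntegralExp ρ ε g₁ ≤ logIntegralExp ρ ε g₂ := by
  refine mul_le_mul_of_nonneg_left (log_le_log (integral_exp_pos h₁) ?_) hε.le
  exact integral_mono h₁ h₂ fun z => exp_le_exp.2 (div_le_div_of_nonneg_right (hle z) hε.le)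

theorem abs_logIntegralExp_sub_le [NeZero ρ] (hε : 0 < ε) (hg₁ : Measurable g₁)
    (h₂ : Integrable (fun z => exp (g₂ z / ε)) ρ) (hM : ∀ z, |g₁ z - g₂ z| ≤ M) :
    |logIntegralExp ρ ε g₁ - logIntegralExp ρ ε g₂| ≤ M := by
  have hle₁ : ∀ z, g₁ z ≤ g₂ z + M := fun z => by linarith [(abs_le.1 (hM z)).2]
  have hle₂ : ∀ z, g₂ z ≤ g₁ z + M := fun z => by linarith [(abs_le.1 (hM z)).1]
  have h₁ := integrable_exp_div_of_le hε hg₁ hle₁ (h₂.exp_add_const_div M)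
  have hup := logIntegralExp_mono hε h₁ (h₂.exp_add_const_div M) hle₁
  have hlo := logIntegralExp_mono hε h₂ (h₁.exp_add_const_div M) hle₂
  rw [logIntegralExp_add_const hε.ne' h₂] at hup
  rw [logIntegralExp_add_const hε.ne' h₁] at hlo
  exact abs_sub_le_iff.2 ⟨by linarith, by linarith⟩

theorem abs_logIntegralExp_le [IsProbabilityMeasure ρ] (hε : 0 < ε) (hg : Measurable g)
    (hM : ∀ z, |g z| ≤ M) : |logIntegralExp ρ ε g| ≤ M := by
  have h := abs_logIntegralExp_sub_le (ρ := ρ) (g₂ := fun _ => 0) hε hg (integrable_const _)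
    (by simpa only [sub_zero] using hM)
  simpa [logIntegralExp] using h

end LogIntegralExp

section Transform

variable {X Y : Type*} [MeasurableSpace Y] {ρ₂ : Measure Y} {c : X → Y → ℝ} {ε M : ℝ}
  {g : Y → ℝ}

theorem transformY_eq_neg_logIntegralExp (x : X) :
    transformY ρ₂ c ε g x = -logIntegralExp ρ₂ ε (fun y => g y - c x y) :=
  neg_mul _ _

theorem exp_neg_transformY_div [NeZero ρ₂] (hε : ε ≠ 0) {x : X}
    (h : Integrable (fun y => exp ((g y - c x y) / ε)) ρ₂) :
    exp (-transformY ρ₂ c ε g x / ε) = ∫ y, exp ((g y - c x y) / ε) ∂ρ₂ := by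
  rw [transformY_eq_neg_logIntegralExp, logIntegralExp, neg_neg, mul_div_cancel_left₀ _ hε,
    exp_log (integral_exp_pos h)]

variable [MeasurableSpace X] {ρ₁ : Measure X} {f : X → ℝ}

theorem measurable_transformY [SFinite ρ₂] (hc : Measurable (Function.uncurry c))
    (hg : Measurable g) : Measurable (transformY ρ₂ c ε g) := by
  have h : Measurable fun p : X × Y => exp ((g p.2 - c p.1 p.2) / ε) :=
    (((hg.comp measurable_snd).sub hc).div_const ε).exp
  exact h.stronglyMeasurable.integral_prod_right'.measurable.log.const_mul (-ε)

theorem integrable_exp_sub_cost_div (hε : 0 < ε) (hc : Measurable (Function.uncurry c))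
    (hM : ∀ x y, |c x y| ≤ M) (hg : Measurable g)
    (hgexp : Integrable (fun y => exp (g y / ε)) ρ₂) (x : X) :
    Integrable (fun y => exp ((g y - c x y) / ε)) ρ₂ :=
  integrable_exp_div_of_le hε (hg.sub (hc.comp measurable_prodMk_left))
    (fun y => by linarith [(abs_le.1 (hM x y)).1]) (hgexp.exp_add_const_div M)

theorem abs_transformY_add_logIntegralExp_le [NeZero ρ₂] (hε : 0 < ε)
    (hc : Measurable (Function.uncurry c)) (hM : ∀ x y, |c x y| ≤ M) (hg : Measurable g)
    (hgexp : Integrable (fun y => exp (g y / ε)) ρ₂) (x : X) :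
    |transformY ρ₂ c ε g x + logIntegralExp ρ₂ ε g| ≤ M := by
  rw [transformY_eq_neg_logIntegralExp, neg_add_eq_sub, abs_sub_comm]
  exact abs_logIntegralExp_sub_le hε (hg.sub (hc.comp measurable_prodMk_left)) hgexp
    fun y => by simpa only [sub_sub_cancel_left, abs_neg] using hM x y

theorem abs_transform_add_logIntegralExp_le [NeZero ρ₁] (hε : 0 < ε)
    (hc : Measurable (Function.uncurry c)) (hM : ∀ x y, |c x y| ≤ M) (hf : Measurable f)
    (hfexp : Integrable (fun x => exp (f x / ε)) ρ₁) (y : Y) :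
    |transform ρ₁ c ε f y + logIntegralExp ρ₁ ε f| ≤ M :=
  abs_transformY_add_logIntegralExp_le (c := Function.swap c) hε (hc.comp measurable_swap)
    (fun y x => hM x y) hf hfexp y

theorem abs_transformY_le [NeZero ρ₂] (hε : 0 < ε) (hc : Measurable (Function.uncurry c))
    (hM : ∀ x y, |c x y| ≤ M) (hg : Measurable g)
    (hgexp : Integrable (fun y => exp (g y / ε)) ρ₂) (x : X) :
    |transformY ρ₂ c ε g x| ≤ M + |logIntegralExp ρ₂ ε g| :=
  (abs_le_abs_add_add_abs _ _).trans
    (add_le_add_left (abs_transformY_add_logIntegralExp_le hε hc hM hg hgexp x) _)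

theorem transformY_add_const [NeZero ρ₂] (hε : 0 < ε) (hc : Measurable (Function.uncurry c))
    (hM : ∀ x y, |c x y| ≤ M) (hg : Measurable g)
    (hgexp : Integrable (fun y => exp (g y / ε)) ρ₂) (t : ℝ) :
    transformY ρ₂ c ε (fun y => g y + t) = fun x => transformY ρ₂ c ε g x - t := by
  funext x
  simp only [transformY_eq_neg_logIntegralExp, add_sub_right_comm _ t]
  rw [logIntegralExp_add_const hε.ne' (integrable_exp_sub_cost_div hε hc hM hg hgexp x)]
  ring

end Transform

section Dfun

variable {X Y : Type*} [MeasurableSpace X] [MeasurableSpace Y] {ρ₁ : Measure X}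
  {ρ₂ : Measure Y} {c : X → Y → ℝ} {ε M : ℝ} {f : X → ℝ} {g : Y → ℝ}

theorem integrable_exp_add_sub_cost_div [SFinite ρ₁] [SFinite ρ₂] (hε : 0 < ε)
    (hc : Measurable (Function.uncurry c)) (hM : ∀ x y, |c x y| ≤ M) (hf : Measurable f)
    (hfexp : Integrable (fun x => exp (f x / ε)) ρ₁) (hg : Measurable g)
    (hgexp : Integrable (fun y => exp (g y / ε)) ρ₂) :
    Integrable (fun p : X × Y => exp ((f p.1 + g p.2 - c p.1 p.2) / ε)) (ρ₁.prod ρ₂) := by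
  have hdom : Integrable (fun p : X × Y => exp ((f p.1 + (g p.2 + M)) / ε)) (ρ₁.prod ρ₂) := by
    simpa only [add_div, exp_add] using hfexp.mul_prod (hgexp.exp_add_const_div M)
  exact integrable_exp_div_of_le hε (((hf.comp measurable_fst).add (hg.comp measurable_snd)).sub hc)
    (fun p => by linarith [(abs_le.1 (hM p.1 p.2)).1]) hdom

theorem integral_exp_add_sub_cost_div [NeZero ρ₂] (hε : 0 < ε)
    (hc : Measurable (Function.uncurry c)) (hM : ∀ x y, |c x y| ≤ M) (hg : Measurable g)
    (hgexp : Integrable (fun y => exp (g y / ε)) ρ₂) (x : X) (s : ℝ) :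
    ∫ y, exp ((s + g y - c x y) / ε) ∂ρ₂ = exp ((s - transformY ρ₂ c ε g x) / ε) := by
  calc ∫ y, exp ((s + g y - c x y) / ε) ∂ρ₂
      = exp (s / ε) * ∫ y, exp ((g y - c x y) / ε) ∂ρ₂ := by
        simp_rw [add_sub_assoc, add_div, exp_add]
        exact integral_const_mul _ _
    _ = exp ((s - transformY ρ₂ c ε g x) / ε) := by
        rw [← exp_neg_transformY_div hε.ne' (integrable_exp_sub_cost_div hε hc hM hg hgexp x),
          ← exp_add]
        ring_nf

theorem integrable_exp_sub_transformY_div [SFinite ρ₁] [SFinite ρ₂] [NeZero ρ₂] (hε : 0 < ε)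
    (hc : Measurable (Function.uncurry c)) (hM : ∀ x y, |c x y| ≤ M) (hf : Measurable f)
    (hfexp : Integrable (fun x => exp (f x / ε)) ρ₁) (hg : Measurable g)
    (hgexp : Integrable (fun y => exp (g y / ε)) ρ₂) :
    Integrable (fun x => exp ((f x - transformY ρ₂ c ε g x) / ε)) ρ₁ :=
  (integrable_exp_add_sub_cost_div hε hc hM hf hfexp hg hgexp).integral_prod_left.congr
    (.of_forall fun x => integral_exp_add_sub_cost_div hε hc hM hg hgexp x (f x))

theorem Dfun_eq_integral [SFinite ρ₁] [SFinite ρ₂] [NeZero ρ₂] (hε : 0 < ε)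
    (hc : Measurable (Function.uncurry c)) (hM : ∀ x y, |c x y| ≤ M) (hf : Measurable f)
    (hf1 : Integrable f ρ₁) (hfexp : Integrable (fun x => exp (f x / ε)) ρ₁) (hg : Measurable g)
    (hgexp : Integrable (fun y => exp (g y / ε)) ρ₂) :
    Dfun ρ₁ ρ₂ c ε f g =
      (∫ x, (f x - ε * exp ((f x - transformY ρ₂ c ε g x) / ε)) ∂ρ₁) + ∫ y, g y ∂ρ₂ := by
  rw [Dfun, integral_prod _ (integrable_exp_add_sub_cost_div hε hc hM hf hfexp hg hgexp),
    integral_sub hf1 ((integrable_exp_sub_transformY_div hε hc hM hf hfexp hg hgexp).const_mul ε),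
    integral_const_mul]
  simp only [integral_exp_add_sub_cost_div hε hc hM hg hgexp]
  ring

theorem Dfun_le_Dfun_transformY [IsFiniteMeasure ρ₁] [SFinite ρ₂] [NeZero ρ₂]
    (hε : 0 < ε) (hc : Measurable (Function.uncurry c)) (hM : ∀ x y, |c x y| ≤ M)
    (hf : Measurable f) (hf1 : Integrable f ρ₁) (hfexp : Integrable (fun x => exp (f x / ε)) ρ₁)
    (hg : Measurable g) (hgexp : Integrable (fun y => exp (g y / ε)) ρ₂) :
    Dfun ρ₁ ρ₂ c ε f g ≤ Dfun ρ₁ ρ₂ c ε (transformY ρ₂ c ε g) g := by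
  set φ := transformY ρ₂ c ε g
  have hφ : Measurable φ := measurable_transformY hc hg
  have hφM := abs_transformY_le hε hc hM hg hgexp
  have hφ1 : Integrable φ ρ₁ :=
    (integrable_const _).mono' hφ.aestronglyMeasurable (.of_forall hφM)
  have hφexp := integrable_exp_div_of_abs_le (ρ := ρ₁) hε hφ hφM
  rw [Dfun_eq_integral hε hc hM hf hf1 hfexp hg hgexp,
    Dfun_eq_integral hε hc hM hφ hφ1 hφexp hg hgexp]
  refine add_le_add (integral_mono
    (hf1.sub ((integrable_exp_sub_transformY_div hε hc hM hf hfexp hg hgexp).const_mul ε))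
    (hφ1.sub ((integrable_exp_sub_transformY_div hε hc hM hφ hφexp hg hgexp).const_mul ε))
    fun x => ?_) le_rfl
  rw [sub_self, zero_div, exp_zero, mul_one]
  exact sub_mul_exp_sub_div_le hε _ _

theorem Dfun_comm [SFinite ρ₁] [SFinite ρ₂] (f : X → ℝ) (g : Y → ℝ) :
    Dfun ρ₁ ρ₂ c ε f g = Dfun ρ₂ ρ₁ (Function.swap c) ε g f := by
  have h : ∫ p, exp ((g p.1 + f p.2 - c p.2 p.1) / ε) ∂(ρ₂.prod ρ₁)
      = ∫ p, exp ((f p.1 + g p.2 - c p.1 p.2) / ε) ∂(ρ₁.prod ρ₂) := by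
    rw [← integral_prod_swap fun p : X × Y => exp ((f p.1 + g p.2 - c p.1 p.2) / ε)]
    simp only [Prod.fst_swap, Prod.snd_swap, add_comm]
  simp only [Dfun, Function.swap, h]
  ring

theorem Dfun_le_Dfun_transform [SFinite ρ₁] [IsFiniteMeasure ρ₂] [NeZero ρ₁]
    (hε : 0 < ε) (hc : Measurable (Function.uncurry c)) (hM : ∀ x y, |c x y| ≤ M)
    (hf : Measurable f) (hfexp : Integrable (fun x => exp (f x / ε)) ρ₁) (hg : Measurable g)
    (hg1 : Integrable g ρ₂) (hgexp : Integrable (fun y => exp (g y / ε)) ρ₂) :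
    Dfun ρ₁ ρ₂ c ε f g ≤ Dfun ρ₁ ρ₂ c ε f (transform ρ₁ c ε f) := by
  rw [Dfun_comm, Dfun_comm (g := transform ρ₁ c ε f)]
  exact Dfun_le_Dfun_transformY hε (hc.comp measurable_swap) (fun y x => hM x y) hg hg1 hgexp hf
    hfexp

theorem Dfun_sub_add_const [IsProbabilityMeasure ρ₁] [IsProbabilityMeasure ρ₂]
    (hf1 : Integrable f ρ₁) (hg1 : Integrable g ρ₂) (a : ℝ) :
    Dfun ρ₁ ρ₂ c ε (fun x => f x - a) (fun y => g y + a) = Dfun ρ₁ ρ₂ c ε f g := by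
  have h : ∀ s t : ℝ, s - a + (t + a) = s + t := fun s t => by ring
  simp only [Dfun, integral_sub hf1 (integrable_const a), integral_add hg1 (integrable_const a),
    integral_const, probReal_univ, one_smul, h]

theorem Dfun_le_Dfun_transformY_transform [IsProbabilityMeasure ρ₁] [IsProbabilityMeasure ρ₂]
    (hε : 0 < ε) (hc : Measurable (Function.uncurry c)) (hM : ∀ x y, |c x y| ≤ M)
    (hf : Measurable f) (hf1 : Integrable f ρ₁) (hfexp : Integrable (fun x => exp (f x / ε)) ρ₁)
    (hg : Measurable g) (hg1 : Integrable g ρ₂) (hgexp : Integrable (fun y => exp (g y / ε)) ρ₂)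
    (a : ℝ) :
    Dfun ρ₁ ρ₂ c ε f g ≤ Dfun ρ₁ ρ₂ c ε (transformY ρ₂ c ε (fun y => g y + a))
      (transform ρ₁ c ε (transformY ρ₂ c ε (fun y => g y + a))) := by
  have hga := hgexp.exp_add_const_div a
  have hφ := measurable_transformY (ρ₂ := ρ₂) (ε := ε) hc (hg.add_const a)
  have hφexp := integrable_exp_div_of_abs_le (ρ := ρ₁) hε hφ
    (abs_transformY_le hε hc hM (hg.add_const a) hga)
  calc Dfun ρ₁ ρ₂ c ε f g = Dfun ρ₁ ρ₂ c ε (fun x => f x - a) (fun y => g y + a) :=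
        (Dfun_sub_add_const hf1 hg1 a).symm
    _ ≤ Dfun ρ₁ ρ₂ c ε (transformY ρ₂ c ε (fun y => g y + a)) (fun y => g y + a) := by
        refine Dfun_le_Dfun_transformY hε hc hM (hf.sub_const a) (hf1.sub (integrable_const a))
          ?_ (hg.add_const a) hga
        simpa only [sub_eq_add_neg] using hfexp.exp_add_const_div (-a)
    _ ≤ _ := Dfun_le_Dfun_transform hε hc hM hφ hφexp (hg.add_const a)
        (hg1.add (integrable_const a)) hga

end Dfun

theorem better_potentials_general
    {X Y : Type*}
    [MeasurableSpace X]
    [MeasurableSpace Y]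
    (ρ₁ : Measure X) [IsProbabilityMeasure ρ₁]
    (ρ₂ : Measure Y) [IsProbabilityMeasure ρ₂]
    (ε : ℝ) (hε : 0 < ε)
    (c : X → Y → ℝ) (hc : Measurable (Function.uncurry c))
    (M : ℝ) (hM : ∀ x y, |c x y| ≤ M)
    (u : X → ℝ) (hu : Measurable u) (hu1 : Integrable u ρ₁)
    (huexp : Integrable (fun x => Real.exp (u x / ε)) ρ₁)
    (v : Y → ℝ) (hv : Measurable v) (hv1 : Integrable v ρ₂)
    (hvexp : Integrable (fun y => Real.exp (v y / ε)) ρ₂) :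
    ∃ a : ℝ,
      (∀ x, |transformY ρ₂ c ε (fun y => v y + a) x| ≤ 3 / 2 * M) ∧
      (∀ y, |transform ρ₁ c ε (transformY ρ₂ c ε (fun y' => v y' + a)) y| ≤ 3 / 2 * M) ∧
      Dfun ρ₁ ρ₂ c ε u v ≤
        Dfun ρ₁ ρ₂ c ε (transformY ρ₂ c ε (fun y => v y + a))
          (transform ρ₁ c ε (transformY ρ₂ c ε (fun y => v y + a))) := by
  set φ : X → ℝ := fun x => transformY ρ₂ c ε v x + logIntegralExp ρ₂ ε v
  have hφ : Measurable φ := (measurable_transformY hc hv).add_const _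
  have hφM : ∀ x, |φ x| ≤ M := abs_transformY_add_logIntegralExp_le hε hc hM hv hvexp
  set L := logIntegralExp ρ₁ ε φ
  have hL : |L / 2| ≤ M / 2 := by
    rw [abs_div, abs_two]; linarith [abs_logIntegralExp_le hε hφ hφM (ρ := ρ₁)]
  set a := L / 2 - logIntegralExp ρ₂ ε v
  have hu_star : transformY ρ₂ c ε (fun y => v y + a) = fun x => φ x - L / 2 := by
    rw [transformY_add_const hε hc hM hv hvexp]
    funext x
    simp only [φ, a]
    ring
  have hu_star_meas : Measurable fun x => φ x - L / 2 := hφ.sub_const _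
  have hu_star_le : ∀ x, |φ x - L / 2| ≤ 3 / 2 * M := fun x => by
    linarith [abs_sub (φ x) (L / 2), hφM x]
  have hu_star_exp := integrable_exp_div_of_abs_le (ρ := ρ₁) hε hu_star_meas hu_star_le
  have hu_star_max : logIntegralExp ρ₁ ε (fun x => φ x - L / 2) = L / 2 := by
    simp only [sub_eq_add_neg]
    rw [logIntegralExp_add_const hε.ne' (integrable_exp_div_of_abs_le hε hφ hφM)]
    ring
  refine ⟨a, by rwa [hu_star], fun y => ?_,
    Dfun_le_Dfun_transformY_transform hε hc hM hu hu1 huexp hv hv1 hvexp a⟩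
  have h := abs_transform_add_logIntegralExp_le hε hc hM hu_star_meas hu_star_exp y
  rw [hu_star_max] at h
  rw [hu_star]
  linarith [abs_le_abs_add_add_abs (transform ρ₁ c ε (fun x => φ x - L / 2) y) (L / 2)]

theorem better_potentials
    {X Y : Type*}
    [MeasurableSpace X] [TopologicalSpace X] [PolishSpace X] [BorelSpace X]
    [MeasurableSpace Y] [TopologicalSpace Y] [PolishSpace Y] [BorelSpace Y]
    (ρ₁ : Measure X) [IsProbabilityMeasure ρ₁]
    (ρ₂ : Measure Y) [IsProbabilityMeasure ρ₂]
    (ε : ℝ) (hε : 0 < ε)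
    (c : X → Y → ℝ) (hc : Measurable (Function.uncurry c))
    (M : ℝ) (hM : ∀ x y, |c x y| ≤ M)
    (u : X → ℝ) (hu : Measurable u) (hu1 : Integrable u ρ₁)
    (huexp : Integrable (fun x => Real.exp (u x / ε)) ρ₁)
    (hupos : 0 < ∫ x, Real.exp (u x / ε) ∂ρ₁)
    (v : Y → ℝ) (hv : Measurable v) (hv1 : Integrable v ρ₂)
    (hvexp : Integrable (fun y => Real.exp (v y / ε)) ρ₂)
    (hvpos : 0 < ∫ y, Real.exp (v y / ε) ∂ρ₂) :
    ∃ a : ℝ,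
      (∀ x, |transformY ρ₂ c ε (fun y => v y + a) x| ≤ 3 / 2 * M) ∧
      (∀ y, |transform ρ₁ c ε (transformY ρ₂ c ε (fun y' => v y' + a)) y| ≤ 3 / 2 * M) ∧
      Dfun ρ₁ ρ₂ c ε u v ≤
        Dfun ρ₁ ρ₂ c ε (transformY ρ₂ c ε (fun y => v y + a))
          (transform ρ₁ c ε (transformY ρ₂ c ε (fun y => v y + a))) :=
  better_potentials_general ρ₁ ρ₂ ε hε c hc M hM u hu hu1 huexp v hv hv1 hvexp

end
end

section
/- The supremum of D_ε(u,v) over u ∈ L_exp^ε(ρ₁), v ∈ L_exp^ε(ρ₂) is attained by a pair (u₀, v₀) with u₀ ∈ L^∞(ρ₁), v₀ ∈ L^∞(ρ₂) and ‖u₀‖_∞, ‖v₀‖_∞ ≤ (3/2)‖c‖_∞; the maximizing pair is unique up to the transformation (u,v) ↦ (u+a, v-a), a ∈ ℝ. -/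
open MeasureTheory Real

noncomputable section
open Classical in

/-- `u ∈ L_exp^ε(ρ)`: `u` is measurable with `0 < ∫ e^{u/ε} dρ < ∞`. -/
def Lexp {Z : Type*} [MeasurableSpace Z] (ε : ℝ) (ρ : Measure Z) (u : Z → ℝ) : Prop :=
  Measurable u ∧ Integrable (fun z => Real.exp (u z / ε)) ρ ∧
    0 < ∫ z, Real.exp (u z / ε) ∂ρ

open Classical in
/-- The dual Entropy–Kantorovich functional, valued in `EReal` (equal to `⊥` when one of
the defining integrals is not finite). -/
def Dext {X Y : Type*} [MeasurableSpace X] [MeasurableSpace Y]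
    (ρ₁ : Measure X) (ρ₂ : Measure Y) (c : X → Y → ℝ) (ε : ℝ)
    (u : X → ℝ) (v : Y → ℝ) : EReal :=
  if Integrable u ρ₁ ∧ Integrable v ρ₂ ∧
      Integrable (fun p : X × Y => Real.exp ((u p.1 + v p.2 - c p.1 p.2) / ε)) (ρ₁.prod ρ₂)
  then (((∫ x, u x ∂ρ₁) + (∫ y, v y ∂ρ₂)
    - ε * ∫ p, Real.exp ((u p.1 + v p.2 - c p.1 p.2) / ε) ∂(ρ₁.prod ρ₂) : ℝ) : EReal)
  else ⊥

/-!
A maximiser is a solution of the Schrödinger system: bounded potentials `u₀, v₀` such that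
`exp ((u₀ x + v₀ y - c x y) / ε) • (ρ₁ ⊗ ρ₂)` has marginals `ρ₁` and `ρ₂`, i.e. each potential is
the `(c, ε)`-transform `u ↦ -ε log ∫ exp ((u - c) / ε)` of the other.

Existence: the normalised Sinkhorn map `u ↦ (u^{c,ε})^{c,ε}` is `2`-Lipschitz for the sup norm
and multiplies oscillations by `(1 - exp (-4M/ε))²`. The latter holds because the normalised Gibbs
weights `exp ((u - c(·, y)) / ε)` at any two points `y, y'` satisfy `w_y ≥ exp (-4M/ε) w_{y'}`, so
that `w_y` is a mixture of `w_{y'}` and another probability density; concavity of `log` turns this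
into the contraction. The iterates of the map from `0` thus converge uniformly to a fixed point,
which solves the system.

Bound: for a solution, `u₀ + L v₀`, `v₀ + L u₀` and `L u₀ + L v₀` all lie in `[-M, M]`, where
`L` is the log-mean-exp (the last one by integrating the system over `ρ₁ ⊗ ρ₂`); shifting the pair
by half of `L v₀ - L u₀` gives `|u₀|, |v₀| ≤ 3M/2`.

Optimality and uniqueness: by `exp (A + s) ≥ exp A * (1 + s)` and the marginal identities,
`D(u₀, v₀) - D(u, v)` is the integral of a nonnegative gap, which vanishes a.e. only if
`(u - u₀) x = (v₀ - v) y` for almost every `(x, y)`, i.e. both sides are the same a.e. constant.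
-/

open Filter Topology

namespace EntropicDual

section LogMeanExp

variable {Z : Type*} [MeasurableSpace Z] {ρ : Measure Z} {ε : ℝ}

def logMeanExp (ε : ℝ) (ρ : Measure Z) (f : Z → ℝ) : ℝ :=
  ε * Real.log (∫ z, exp (f z / ε) ∂ρ)

lemma integrable_exp_div [IsFiniteMeasure ρ] (hε : 0 < ε) {f : Z → ℝ} (hf : Measurable f)
    {K : ℝ} (hK : ∀ z, f z ≤ K) : Integrable (fun z => exp (f z / ε)) ρ :=
  .of_bound (hf.div_const ε).exp.aestronglyMeasurable (exp (K / ε)) <| ae_of_all _ fun z => by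
    rw [Real.norm_of_nonneg (exp_pos _).le]
    exact exp_le_exp.2 (div_le_div_of_nonneg_right (hK z) hε.le)

lemma integral_exp_div_le_of_le_add (hε : 0 < ε) {f g : Z → ℝ} {d : ℝ}
    (hf : Integrable (fun z => exp (f z / ε)) ρ) (hg : Integrable (fun z => exp (g z / ε)) ρ)
    (hfg : ∀ z, f z ≤ g z + d) :
    ∫ z, exp (f z / ε) ∂ρ ≤ exp (d / ε) * ∫ z, exp (g z / ε) ∂ρ := by
  rw [← integral_const_mul]
  refine integral_mono hf (hg.const_mul _) fun z => ?_
  rw [← exp_add, ← add_div, add_comm d]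
  exact exp_le_exp.2 (div_le_div_of_nonneg_right (hfg z) hε.le)

lemma exp_logMeanExp_div [NeZero ρ] (hε : 0 < ε) {f : Z → ℝ}
    (hf : Integrable (fun z => exp (f z / ε)) ρ) :
    exp (logMeanExp ε ρ f / ε) = ∫ z, exp (f z / ε) ∂ρ := by
  rw [logMeanExp, mul_div_cancel_left₀ _ hε.ne', exp_log (integral_exp_pos hf)]

lemma lexp_of_le [IsFiniteMeasure ρ] [NeZero ρ] (hε : 0 < ε) {u : Z → ℝ} (hu : Measurable u) {U : ℝ}
    (hub : ∀ z, u z ≤ U) : Lexp ε ρ u :=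
  ⟨hu, integrable_exp_div hε hu hub, integral_exp_pos (integrable_exp_div hε hu hub)⟩

lemma logMeanExp_le_add [NeZero ρ] (hε : 0 < ε) {f g : Z → ℝ} {d : ℝ}
    (hf : Integrable (fun z => exp (f z / ε)) ρ) (hg : Integrable (fun z => exp (g z / ε)) ρ)
    (hfg : ∀ z, f z ≤ g z + d) : logMeanExp ε ρ f ≤ logMeanExp ε ρ g + d := by
  have h := integral_exp_div_le_of_le_add hε hf hg hfg
  rwa [← exp_logMeanExp_div hε hf, ← exp_logMeanExp_div hε hg, ← exp_add, exp_le_exp, ← add_div,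
    div_le_div_iff_of_pos_right hε, add_comm d] at h

lemma abs_logMeanExp_sub_le [NeZero ρ] (hε : 0 < ε) {f g : Z → ℝ} {d : ℝ}
    (hf : Integrable (fun z => exp (f z / ε)) ρ) (hg : Integrable (fun z => exp (g z / ε)) ρ)
    (hfg : ∀ z, |f z - g z| ≤ d) : |logMeanExp ε ρ f - logMeanExp ε ρ g| ≤ d := by
  rw [abs_sub_le_iff]
  constructor
  · linarith [logMeanExp_le_add (d := d) hε hf hg fun z => by linarith [(abs_le.1 (hfg z)).2]]
  · linarith [logMeanExp_le_add (d := d) hε hg hf fun z => by linarith [(abs_le.1 (hfg z)).1]]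

lemma logMeanExp_const [IsProbabilityMeasure ρ] (hε : 0 < ε) (a : ℝ) :
    logMeanExp ε ρ (fun _ => a) = a := by
  simp [logMeanExp, mul_div_cancel₀ _ hε.ne']

lemma abs_logMeanExp_le [IsProbabilityMeasure ρ] (hε : 0 < ε) {f : Z → ℝ} (hf : Measurable f)
    {K : ℝ} (hK : ∀ z, |f z| ≤ K) : |logMeanExp ε ρ f| ≤ K := by
  simpa [logMeanExp_const hε] using abs_logMeanExp_sub_le (g := fun _ => 0) hε
    (integrable_exp_div (ρ := ρ) hε hf fun z => (abs_le.1 (hK z)).2) (integrable_const _)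
    (by simpa using hK)

end LogMeanExp

lemma exists_forall_le_and_le_add_of_sub_le {Z : Type*} [Nonempty Z] {w : Z → ℝ} {D : ℝ}
    (h : ∀ z z', w z - w z' ≤ D) : ∃ a, ∀ z, a ≤ w z ∧ w z ≤ a + D := by
  obtain ⟨z₀⟩ := ‹Nonempty Z›
  have hbdd : BddBelow (Set.range w) := ⟨w z₀ - D, by rintro _ ⟨z, rfl⟩; linarith [h z₀ z]⟩
  refine ⟨⨅ z, w z, fun z => ⟨ciInf_le hbdd z, ?_⟩⟩
  linarith [le_ciInf fun z' => (by linarith [h z z'] : w z - D ≤ w z')]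

lemma add_mul_sub_le_integral_mul {Z : Type*} [MeasurableSpace Z] {μ : Measure Z}
    {e g g' : Z → ℝ} {α θ : ℝ} (he : ∀ z, α ≤ e z) (hg : ∀ z, θ * g' z ≤ g z)
    (hgi : Integrable g μ) (hg'i : Integrable g' μ) (hegi : Integrable (fun z => e z * g z) μ)
    (heg'i : Integrable (fun z => e z * g' z) μ) :
    θ * ∫ z, e z * g' z ∂μ + α * (∫ z, g z ∂μ - θ * ∫ z, g' z ∂μ) ≤ ∫ z, e z * g z ∂μ := by
  have hrest : Integrable (fun z => α * (g z - θ * g' z)) μ :=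
    (hgi.sub (hg'i.const_mul θ)).const_mul α
  rw [← integral_const_mul, ← integral_const_mul, ← integral_sub hgi (hg'i.const_mul θ),
    ← integral_const_mul, ← integral_add (heg'i.const_mul θ) hrest]
  refine integral_mono ((heg'i.const_mul θ).add hrest) hegi fun z => ?_
  nlinarith [mul_nonneg (sub_nonneg.2 (he z)) (sub_nonneg.2 (hg z))]

lemma log_sub_log_le_of_mul_add_le {θ α β R R' : ℝ} (hθ₀ : 0 ≤ θ) (hθ₁ : θ ≤ 1) (hα : 0 < α)
    (hR' : 0 < R') (hR'β : R' ≤ β) (h : θ * R' + (1 - θ) * α ≤ R) :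
    log R' - log R ≤ (1 - θ) * (log β - log α) := by
  have hpos : 0 < θ * R' + (1 - θ) * α :=
    convex_Ioi (0 : ℝ) hR' hα hθ₀ (sub_nonneg.2 hθ₁) (add_sub_cancel θ 1)
  have hconc := strictConcaveOn_log_Ioi.concaveOn.2 hR' hα hθ₀ (sub_nonneg.2 hθ₁)
    (add_sub_cancel θ 1)
  simp only [smul_eq_mul] at hconc
  have h₁ := log_le_log hpos h
  have h₂ := mul_le_mul_of_nonneg_left (log_le_log hR' hR'β) (sub_nonneg.2 hθ₁)
  nlinarith

section CTransform

variable {Z W : Type*} [MeasurableSpace Z] [MeasurableSpace W] {ρ : Measure Z} {ε M U : ℝ}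
  {k : W → Z → ℝ} {u u' : Z → ℝ}

def cTransform (ε : ℝ) (ρ : Measure Z) (k : W → Z → ℝ) (u : Z → ℝ) (t : W) : ℝ :=
  -logMeanExp ε ρ fun z => u z - k t z

lemma measurable_cTransform [SFinite ρ] (hk : Measurable (Function.uncurry k))
    (hu : Measurable u) : Measurable (cTransform ε ρ k u) := by
  have hexp : StronglyMeasurable fun p : W × Z => exp ((u p.2 - Function.uncurry k p) / ε) :=
    (((hu.comp measurable_snd).sub hk).div_const ε).exp.stronglyMeasurable
  exact (measurable_const.mul (measurable_log.comp hexp.integral_prod_right'.measurable)).neg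

lemma integrable_exp_sub_kernel [IsFiniteMeasure ρ] (hε : 0 < ε)
    (hk : Measurable (Function.uncurry k)) (hkb : ∀ t z, |k t z| ≤ M) (hu : Measurable u)
    (hub : ∀ z, |u z| ≤ U) (t : W) : Integrable (fun z => exp ((u z - k t z) / ε)) ρ :=
  integrable_exp_div hε (hu.sub (hk.comp measurable_prodMk_left)) (K := U + M) fun z => by
    linarith [(abs_le.1 (hub z)).2, (abs_le.1 (hkb t z)).1]

lemma exp_neg_cTransform_div [IsFiniteMeasure ρ] [NeZero ρ] (hε : 0 < ε)
    (hk : Measurable (Function.uncurry k)) (hkb : ∀ t z, |k t z| ≤ M) (hu : Measurable u)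
    (hub : ∀ z, |u z| ≤ U) (t : W) :
    exp (-cTransform ε ρ k u t / ε) = ∫ z, exp ((u z - k t z) / ε) ∂ρ := by
  rw [cTransform, neg_neg, exp_logMeanExp_div hε (integrable_exp_sub_kernel hε hk hkb hu hub t)]

lemma cTransform_eq_of_integral_exp_eq_one [IsFiniteMeasure ρ] [NeZero ρ] (hε : 0 < ε)
    (hk : Measurable (Function.uncurry k)) (hkb : ∀ t z, |k t z| ≤ M) (hu : Measurable u)
    (hub : ∀ z, |u z| ≤ U) {t : W} (a : ℝ) (h : ∫ z, exp ((a + u z - k t z) / ε) ∂ρ = 1) :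
    cTransform ε ρ k u t = a := by
  have h₁ : exp (a / ε) * exp (-cTransform ε ρ k u t / ε) = 1 := by
    rw [exp_neg_cTransform_div hε hk hkb hu hub t, ← integral_const_mul, ← h]
    congr 1 with z
    rw [← exp_add]
    ring_nf
  rw [← exp_add, exp_eq_one_iff, ← add_div, div_eq_zero_iff] at h₁
  rcases h₁ with h₁ | h₁
  · linarith
  · exact absurd h₁ hε.ne'

variable [IsProbabilityMeasure ρ]

lemma abs_cTransform_le (hε : 0 < ε) (hk : Measurable (Function.uncurry k))
    (hkb : ∀ t z, |k t z| ≤ M) (hu : Measurable u) (hub : ∀ z, |u z| ≤ U) (t : W) :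
    |cTransform ε ρ k u t| ≤ U + M := by
  rw [cTransform, abs_neg]
  exact abs_logMeanExp_le hε (hu.sub (hk.comp measurable_prodMk_left)) fun z =>
    (abs_sub _ _).trans (add_le_add (hub z) (hkb t z))

lemma cTransform_sub_cTransform_le (hε : 0 < ε) (hk : Measurable (Function.uncurry k))
    (hkb : ∀ t z, |k t z| ≤ M) (hu : Measurable u) (hub : ∀ z, |u z| ≤ U) (t t' : W) :
    cTransform ε ρ k u t - cTransform ε ρ k u t' ≤ 2 * M := by
  have := logMeanExp_le_add (ρ := ρ) (d := 2 * M) hε (integrable_exp_sub_kernel hε hk hkb hu hub t')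
    (integrable_exp_sub_kernel hε hk hkb hu hub t) fun z => by
      linarith [(abs_le.1 (hkb t z)).2, (abs_le.1 (hkb t' z)).1]
  rw [cTransform, cTransform]
  linarith

lemma abs_cTransform_add_logMeanExp_le (hε : 0 < ε) (hk : Measurable (Function.uncurry k))
    (hkb : ∀ t z, |k t z| ≤ M) (hu : Measurable u) (hub : ∀ z, |u z| ≤ U) (t : W) :
    |cTransform ε ρ k u t + logMeanExp ε ρ u| ≤ M := by
  rw [cTransform, neg_add_eq_sub]
  exact abs_logMeanExp_sub_le hε (integrable_exp_div hε hu fun z => (abs_le.1 (hub z)).2)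
    (integrable_exp_sub_kernel hε hk hkb hu hub t) fun z => by simpa using hkb t z

lemma cTransform_le_cTransform_add (hε : 0 < ε) (hk : Measurable (Function.uncurry k))
    (hkb : ∀ t z, |k t z| ≤ M) (hu : Measurable u) (hu' : Measurable u') (hub : ∀ z, |u z| ≤ U)
    (hub' : ∀ z, |u' z| ≤ U) {d : ℝ} (hd : ∀ z, u z ≤ u' z + d) (t : W) :
    cTransform ε ρ k u' t ≤ cTransform ε ρ k u t + d := by
  have := logMeanExp_le_add (ρ := ρ) (d := d) hε (integrable_exp_sub_kernel hε hk hkb hu hub t)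
    (integrable_exp_sub_kernel hε hk hkb hu' hub' t) fun z => by linarith [hd z]
  rw [cTransform, cTransform]
  linarith

lemma abs_cTransform_sub_le (hε : 0 < ε) (hk : Measurable (Function.uncurry k))
    (hkb : ∀ t z, |k t z| ≤ M) (hu : Measurable u) (hu' : Measurable u') (hub : ∀ z, |u z| ≤ U)
    (hub' : ∀ z, |u' z| ≤ U) {d : ℝ} (hd : ∀ z, |u z - u' z| ≤ d) (t : W) :
    |cTransform ε ρ k u t - cTransform ε ρ k u' t| ≤ d := by
  rw [abs_sub_le_iff]
  constructor
  · linarith [cTransform_le_cTransform_add (ρ := ρ) (d := d) hε hk hkb hu' hu hub' hub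
      (fun z => by linarith [(abs_le.1 (hd z)).1]) t]
  · linarith [cTransform_le_cTransform_add (ρ := ρ) (d := d) hε hk hkb hu hu' hub hub'
      (fun z => by linarith [(abs_le.1 (hd z)).2]) t]

lemma exp_cTransform_sub_div (hε : 0 < ε) (hk : Measurable (Function.uncurry k))
    (hkb : ∀ t z, |k t z| ≤ M) (hu : Measurable u) (hu' : Measurable u') (hub : ∀ z, |u z| ≤ U)
    (hub' : ∀ z, |u' z| ≤ U) (t : W) :
    exp ((cTransform ε ρ k u' t - cTransform ε ρ k u t) / ε)
      = (∫ z, exp ((u z - k t z) / ε) ∂ρ) / ∫ z, exp ((u' z - k t z) / ε) ∂ρ := by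
  rw [show (cTransform ε ρ k u' t - cTransform ε ρ k u t) / ε
    = -cTransform ε ρ k u t / ε - -cTransform ε ρ k u' t / ε by ring, exp_sub,
    exp_neg_cTransform_div hε hk hkb hu hub, exp_neg_cTransform_div hε hk hkb hu' hub']

lemma mul_exp_cTransform_sub_add_le (hε : 0 < ε) (hk : Measurable (Function.uncurry k))
    (hkb : ∀ t z, |k t z| ≤ M) (hu : Measurable u) (hu' : Measurable u') (hub : ∀ z, |u z| ≤ U)
    (hub' : ∀ z, |u' z| ≤ U) {a : ℝ} (ha : ∀ z, a ≤ u z - u' z) (t t' : W) :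
    exp (-(4 * M) / ε) * exp ((cTransform ε ρ k u' t' - cTransform ε ρ k u t') / ε)
        + (1 - exp (-(4 * M) / ε)) * exp (a / ε)
      ≤ exp ((cTransform ε ρ k u' t - cTransform ε ρ k u t) / ε) := by
  have hint := integrable_exp_sub_kernel (ρ := ρ) hε hk hkb hu hub
  have hint' := integrable_exp_sub_kernel (ρ := ρ) hε hk hkb hu' hub'
  rw [exp_cTransform_sub_div hε hk hkb hu hu' hub hub',
    exp_cTransform_sub_div hε hk hkb hu hu' hub hub']
  set I := fun s => ∫ z, exp ((u z - k s z) / ε) ∂ρ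
  set N := fun s => ∫ z, exp ((u' z - k s z) / ε) ∂ρ
  have hN : ∀ s, 0 < N s := fun s => integral_exp_pos (hint' s)
  set θ := exp (-(4 * M) / ε)
  -- Normalised, the weights `exp ((u' - k t) / ε)` dominate `θ` times those at `t'`; the excess
  -- has mass `(1 - θ) N t` and carries the factor `exp ((u - u') / ε) ≥ exp (a / ε)`.
  have hNN : N t ≤ exp (2 * M / ε) * N t' :=
    integral_exp_div_le_of_le_add hε (hint' t) (hint' t') fun z => by
      linarith [(abs_le.1 (hkb t z)).1, (abs_le.1 (hkb t' z)).2]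
  have hθ' : θ * N t / N t' ≤ exp (-(2 * M) / ε) := by
    rw [div_le_iff₀ (hN t')]
    calc θ * N t ≤ θ * (exp (2 * M / ε) * N t') := by gcongr
      _ = exp (-(2 * M) / ε) * N t' := by rw [← mul_assoc, ← exp_add]; ring_nf
  have hg : ∀ z, θ * N t / N t' * exp ((u' z - k t' z) / ε) ≤ exp ((u' z - k t z) / ε) := by
    intro z
    refine (mul_le_mul_of_nonneg_right hθ' (exp_pos _).le).trans ?_
    rw [← exp_add, ← add_div]
    exact exp_le_exp.2 (div_le_div_of_nonneg_right
      (by linarith [(abs_le.1 (hkb t z)).2, (abs_le.1 (hkb t' z)).1]) hε.le)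
  have he : ∀ z, exp (a / ε) ≤ exp ((u z - u' z) / ε) := fun z =>
    exp_le_exp.2 (div_le_div_of_nonneg_right (ha z) hε.le)
  have hfactor : ∀ s z, exp ((u z - u' z) / ε) * exp ((u' z - k s z) / ε)
      = exp ((u z - k s z) / ε) := fun s z => by rw [← exp_add]; ring_nf
  have hmass := add_mul_sub_le_integral_mul he hg (hint' t) (hint' t')
    (by simpa only [hfactor] using hint t) (by simpa only [hfactor] using hint t')
  simp only [hfactor] at hmass
  rw [le_div_iff₀ (hN t)]
  calc (θ * (I t' / N t') + (1 - θ) * exp (a / ε)) * N t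
      = θ * N t / N t' * I t' + exp (a / ε) * (N t - θ * N t / N t' * N t') := by
        have := (hN t').ne'
        field_simp
    _ ≤ I t := hmass

lemma cTransform_sub_sub_le (hε : 0 < ε) (hk : Measurable (Function.uncurry k))
    (hkb : ∀ t z, |k t z| ≤ M) (hu : Measurable u) (hu' : Measurable u') (hub : ∀ z, |u z| ≤ U)
    (hub' : ∀ z, |u' z| ≤ U) {D : ℝ} (hD : ∀ z z', (u z - u' z) - (u z' - u' z') ≤ D)
    (t t' : W) :
    (cTransform ε ρ k u t - cTransform ε ρ k u' t)
        - (cTransform ε ρ k u t' - cTransform ε ρ k u' t')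
      ≤ (1 - exp (-(4 * M) / ε)) * D := by
  have := nonempty_of_isProbabilityMeasure ρ
  obtain ⟨a, ha⟩ := exists_forall_le_and_le_add_of_sub_le hD
  have hM : 0 ≤ M := (abs_nonneg _).trans (hkb t (Classical.arbitrary Z))
  have hupper := cTransform_le_cTransform_add (ρ := ρ) hε hk hkb hu hu' hub hub'
    (d := a + D) (fun z => by linarith [(ha z).2]) t'
  have hθ : exp (-(4 * M) / ε) ≤ 1 :=
    exp_le_one_iff.2 (div_nonpos_of_nonpos_of_nonneg (by linarith) hε.le)
  have h := log_sub_log_le_of_mul_add_le (β := exp ((a + D) / ε)) (exp_pos _).le hθ (exp_pos _)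
    (exp_pos _) (exp_le_exp.2 (div_le_div_of_nonneg_right (by linarith) hε.le))
    (mul_exp_cTransform_sub_add_le hε hk hkb hu hu' hub hub' (fun z => (ha z).1) t t')
  simp only [log_exp, ← sub_div] at h
  rw [div_le_iff₀ hε, add_sub_cancel_left, mul_assoc, div_mul_cancel₀ _ hε.ne'] at h
  linarith

end CTransform

lemma exists_fixedPoint_of_abs_succ_sub_le {X : Type*} [MeasurableSpace X]
    {Φ : (X → ℝ) → X → ℝ} {s : ℕ → X → ℝ} {K L C r : ℝ} (hr₀ : 0 ≤ r) (hr : r < 1)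
    (hsm : ∀ n, Measurable (s n)) (hsb : ∀ n x, |s n x| ≤ K) (hsucc : ∀ n, s (n + 1) = Φ (s n))
    (hgeo : ∀ n x, |s (n + 1) x - s n x| ≤ C * r ^ n)
    (hlip : ∀ u, Measurable u → (∀ x, |u x| ≤ K) → ∀ n d, (∀ x, |u x - s n x| ≤ d) →
      ∀ x, |Φ u x - Φ (s n) x| ≤ L * d) :
    ∃ u, Measurable u ∧ (∀ x, |u x| ≤ K) ∧ Φ u = u := by
  have hdist : ∀ x n, dist (s n x) (s (n + 1) x) ≤ C * r ^ n := fun x n => by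
    rw [Real.dist_eq, abs_sub_comm]; exact hgeo n x
  choose u hu using fun x =>
    cauchySeq_tendsto_of_complete (cauchySeq_of_le_geometric r C hr (hdist x))
  have hum : Measurable u := measurable_of_tendsto_metrizable hsm (tendsto_pi_nhds.2 hu)
  have hub : ∀ x, |u x| ≤ K := fun x =>
    le_of_tendsto (hu x).abs (Eventually.of_forall fun n => hsb n x)
  have hlim : Tendsto (fun n => L * (C * r ^ n / (1 - r))) atTop (𝓝 0) := by
    simpa using (((tendsto_pow_atTop_nhds_zero_of_lt_one hr₀ hr).const_mul C).div_const
      (1 - r)).const_mul L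
  refine ⟨u, hum, hub, funext fun x =>
    tendsto_nhds_unique ?_ ((hu x).comp (tendsto_add_atTop_nat 1))⟩
  refine tendsto_iff_norm_sub_tendsto_zero.2
    (squeeze_zero (fun n => norm_nonneg _) (fun n => ?_) hlim)
  rw [Real.norm_eq_abs, Function.comp_apply, hsucc, abs_sub_comm]
  refine hlip u hum hub n _ (fun x => ?_) x
  rw [← Real.dist_eq, dist_comm]
  exact dist_le_of_le_geometric_of_tendsto r C hr (hdist x) (hu x) n

section Sinkhorn

variable {X Y : Type*} [MeasurableSpace X] [MeasurableSpace Y] {ρ₁ : Measure X} {ρ₂ : Measure Y}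
  [IsProbabilityMeasure ρ₁] [IsProbabilityMeasure ρ₂] {ε M U : ℝ} {c : X → Y → ℝ} {u u' : X → ℝ}

-- Normalised at `x₀`, since the double transform commutes with adding constants.
def sinkhornMap (ε : ℝ) (ρ₁ : Measure X) (ρ₂ : Measure Y) (c : X → Y → ℝ) (x₀ : X)
    (u : X → ℝ) (x : X) : ℝ :=
  cTransform ε ρ₂ c (cTransform ε ρ₁ (Function.swap c) u) x -
    cTransform ε ρ₂ c (cTransform ε ρ₁ (Function.swap c) u) x₀

lemma measurable_uncurry_swap (hc : Measurable (Function.uncurry c)) :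
    Measurable (Function.uncurry (Function.swap c)) :=
  hc.comp measurable_swap

lemma measurable_sinkhornMap (hc : Measurable (Function.uncurry c)) (hu : Measurable u) (x₀ : X) :
    Measurable (sinkhornMap ε ρ₁ ρ₂ c x₀ u) :=
  (measurable_cTransform hc (measurable_cTransform (measurable_uncurry_swap hc) hu)).sub_const _

lemma abs_sinkhornMap_le (hε : 0 < ε) (hc : Measurable (Function.uncurry c))
    (hM : ∀ x y, |c x y| ≤ M) (hu : Measurable u) (hub : ∀ x, |u x| ≤ U) (x₀ x : X) :
    |sinkhornMap ε ρ₁ ρ₂ c x₀ u x| ≤ 2 * M := by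
  have hvm := measurable_cTransform (ε := ε) (ρ := ρ₁) (measurable_uncurry_swap hc) hu
  have hvb := abs_cTransform_le (ρ := ρ₁) hε (measurable_uncurry_swap hc) (fun y x => hM x y) hu hub
  rw [sinkhornMap, abs_le]
  constructor
  · linarith [cTransform_sub_cTransform_le (ρ := ρ₂) hε hc hM hvm hvb x₀ x]
  · exact cTransform_sub_cTransform_le hε hc hM hvm hvb x x₀

lemma abs_sinkhornMap_sub_le (hε : 0 < ε) (hc : Measurable (Function.uncurry c))
    (hM : ∀ x y, |c x y| ≤ M) (hu : Measurable u) (hu' : Measurable u') (hub : ∀ x, |u x| ≤ U)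
    (hub' : ∀ x, |u' x| ≤ U) {d : ℝ} (hd : ∀ x, |u x - u' x| ≤ d) (x₀ x : X) :
    |sinkhornMap ε ρ₁ ρ₂ c x₀ u x - sinkhornMap ε ρ₁ ρ₂ c x₀ u' x| ≤ 2 * d := by
  have hc' := measurable_uncurry_swap hc
  have hM' : ∀ y x, |Function.swap c y x| ≤ M := fun y x => hM x y
  have hB := abs_cTransform_sub_le (ρ := ρ₁) hε hc' hM' hu hu' hub hub' hd
  have hA := abs_cTransform_sub_le (ρ := ρ₂) hε hc hM (measurable_cTransform hc' hu)
    (measurable_cTransform hc' hu') (abs_cTransform_le hε hc' hM' hu hub)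
    (abs_cTransform_le hε hc' hM' hu' hub') hB
  rw [sinkhornMap, sinkhornMap]
  have h₁ := abs_le.1 (hA x)
  have h₂ := abs_le.1 (hA x₀)
  rw [abs_le]
  constructor <;> linarith

lemma sinkhornMap_sub_sub_le (hε : 0 < ε) (hc : Measurable (Function.uncurry c))
    (hM : ∀ x y, |c x y| ≤ M) (hu : Measurable u) (hu' : Measurable u') (hub : ∀ x, |u x| ≤ U)
    (hub' : ∀ x, |u' x| ≤ U) {D : ℝ} (hD : ∀ x x', (u x - u' x) - (u x' - u' x') ≤ D)
    (x₀ x x' : X) :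
    (sinkhornMap ε ρ₁ ρ₂ c x₀ u x - sinkhornMap ε ρ₁ ρ₂ c x₀ u' x)
      - (sinkhornMap ε ρ₁ ρ₂ c x₀ u x' - sinkhornMap ε ρ₁ ρ₂ c x₀ u' x')
      ≤ (1 - exp (-(4 * M) / ε)) ^ 2 * D := by
  have hc' := measurable_uncurry_swap hc
  have hM' : ∀ y x, |Function.swap c y x| ≤ M := fun y x => hM x y
  have hB := cTransform_sub_sub_le (ρ := ρ₁) hε hc' hM' hu hu' hub hub' hD
  have hA := cTransform_sub_sub_le (ρ := ρ₂) hε hc hM (measurable_cTransform hc' hu)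
    (measurable_cTransform hc' hu') (abs_cTransform_le hε hc' hM' hu hub)
    (abs_cTransform_le hε hc' hM' hu' hub') hB x x'
  simp only [sinkhornMap]
  linarith

lemma exists_fixedPoint_sinkhornMap (hε : 0 < ε) (hc : Measurable (Function.uncurry c))
    (hM : ∀ x y, |c x y| ≤ M) (x₀ : X) :
    ∃ u, Measurable u ∧ (∀ x, |u x| ≤ 2 * M) ∧ sinkhornMap ε ρ₁ ρ₂ c x₀ u = u := by
  obtain ⟨y₀⟩ := nonempty_of_isProbabilityMeasure ρ₂
  have hM₀ : 0 ≤ M := (abs_nonneg _).trans (hM x₀ y₀)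
  obtain ⟨s, hs₀, hsucc⟩ : ∃ s : ℕ → X → ℝ,
      s 0 = 0 ∧ ∀ n, s (n + 1) = sinkhornMap ε ρ₁ ρ₂ c x₀ (s n) :=
    ⟨fun n => (sinkhornMap ε ρ₁ ρ₂ c x₀)^[n] 0, rfl, fun n => Function.iterate_succ_apply' _ n _⟩
  have hs : ∀ n, Measurable (s n) ∧ ∀ x, |s n x| ≤ 2 * M := by
    intro n
    induction n with
    | zero => exact ⟨hs₀ ▸ measurable_const, fun x => by simpa [hs₀] using hM₀⟩
    | succ n ih =>
      rw [hsucc]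
      exact ⟨measurable_sinkhornMap hc ih.1 x₀, abs_sinkhornMap_le hε hc hM ih.1 ih.2 x₀⟩
  have hbase : ∀ n, s n x₀ = 0 := fun n => by cases n <;> simp [hs₀, hsucc, sinkhornMap]
  set q := 1 - exp (-(4 * M) / ε)
  have hq₀ : 0 ≤ q := sub_nonneg.2 (exp_le_one_iff.2
    (div_nonpos_of_nonpos_of_nonneg (by linarith) hε.le))
  have hq : q < 1 := sub_lt_self 1 (exp_pos _)
  have hosc : ∀ n x x', (s (n + 1) x - s n x) - (s (n + 1) x' - s n x')
      ≤ 4 * M * (q ^ 2) ^ n := by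
    intro n
    induction n with
    | zero =>
      intro x x'
      have h₁ := abs_le.1 ((hs 1).2 x)
      have h₂ := abs_le.1 ((hs 1).2 x')
      simp only [hs₀, Pi.zero_apply, pow_zero, mul_one]
      linarith
    | succ n ih =>
      intro x x'
      have h := sinkhornMap_sub_sub_le (ρ₁ := ρ₁) (ρ₂ := ρ₂) hε hc hM (hs (n + 1)).1 (hs n).1
        (hs (n + 1)).2 (hs n).2 ih x₀ x x'
      rw [← hsucc, ← hsucc] at h
      exact h.trans_eq (by ring)
  refine exists_fixedPoint_of_abs_succ_sub_le (L := 2) (C := 4 * M) (pow_nonneg hq₀ 2)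
    (pow_lt_one₀ hq₀ hq two_ne_zero) (fun n => (hs n).1) (fun n => (hs n).2) hsucc
    (fun n x => ?_) fun u hu hub n d hd x =>
      abs_sinkhornMap_sub_le hε hc hM hu (hs n).1 hub (hs n).2 hd x₀ x
  have h₁ := hosc n x x₀
  have h₂ := hosc n x₀ x
  rw [hbase, hbase] at h₁ h₂
  rw [abs_le]
  constructor <;> linarith

end Sinkhorn

section Schrodinger

variable {X Y : Type*} [MeasurableSpace X] [MeasurableSpace Y] {ρ₁ : Measure X} {ρ₂ : Measure Y}
  {ε M U V : ℝ} {c : X → Y → ℝ} {u : X → ℝ} {v : Y → ℝ}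

def IsSchrodingerPair (ρ₁ : Measure X) (ρ₂ : Measure Y) (ε : ℝ) (c : X → Y → ℝ) (u : X → ℝ)
    (v : Y → ℝ) : Prop :=
  (∀ x, ∫ y, exp ((u x + v y - c x y) / ε) ∂ρ₂ = 1) ∧
    ∀ y, ∫ x, exp ((u x + v y - c x y) / ε) ∂ρ₁ = 1

lemma IsSchrodingerPair.shift (h : IsSchrodingerPair ρ₁ ρ₂ ε c u v) (a : ℝ) :
    IsSchrodingerPair ρ₁ ρ₂ ε c (fun x => u x + a) (fun y => v y - a) := by
  simpa only [IsSchrodingerPair, add_add_sub_cancel] using h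

variable [IsProbabilityMeasure ρ₁] [IsProbabilityMeasure ρ₂]

lemma integrable_exp_add_sub (hε : 0 < ε) (hc : Measurable (Function.uncurry c))
    (hM : ∀ x y, |c x y| ≤ M) (hu : Measurable u) (hv : Measurable v) (hub : ∀ x, |u x| ≤ U)
    (hvb : ∀ y, |v y| ≤ V) :
    Integrable (fun p : X × Y => exp ((u p.1 + v p.2 - c p.1 p.2) / ε)) (ρ₁.prod ρ₂) :=
  integrable_exp_div hε (((hu.comp measurable_fst).add (hv.comp measurable_snd)).sub hc)
    (K := U + V + M) fun p => by
      linarith [(abs_le.1 (hub p.1)).2, (abs_le.1 (hvb p.2)).2, (abs_le.1 (hM p.1 p.2)).1]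

lemma eq_of_integral_slices_eq {f : X × Y → ℝ} (hf : Integrable f (ρ₁.prod ρ₂)) {a b : ℝ}
    (ha : ∀ x, ∫ y, f (x, y) ∂ρ₂ = a) (hb : ∀ y, ∫ x, f (x, y) ∂ρ₁ = b) : a = b := by
  have h₁ := integral_prod f hf
  have h₂ := integral_prod_symm f hf
  simp only [ha, hb, integral_const, probReal_univ, one_smul] at h₁ h₂
  rw [← h₁, h₂]

lemma logMeanExp_prod_add {f : X → ℝ} {g : Y → ℝ}
    (hf : Integrable (fun x => exp (f x / ε)) ρ₁) (hg : Integrable (fun y => exp (g y / ε)) ρ₂) :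
    logMeanExp ε (ρ₁.prod ρ₂) (fun p => f p.1 + g p.2) = logMeanExp ε ρ₁ f + logMeanExp ε ρ₂ g := by
  simp only [logMeanExp, add_div, exp_add]
  rw [integral_prod_mul (fun x => exp (f x / ε)) (fun y => exp (g y / ε)),
    log_mul (integral_exp_pos hf).ne' (integral_exp_pos hg).ne', mul_add]

lemma isSchrodingerPair_of_fixedPoint (hε : 0 < ε) (hc : Measurable (Function.uncurry c))
    (hM : ∀ x y, |c x y| ≤ M) (hu : Measurable u) (hub : ∀ x, |u x| ≤ U) {x₀ : X}
    (hfix : sinkhornMap ε ρ₁ ρ₂ c x₀ u = u) :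
    IsSchrodingerPair ρ₁ ρ₂ ε c u (cTransform ε ρ₁ (Function.swap c) u) := by
  have hc' := measurable_uncurry_swap hc
  have hM' : ∀ y x, |Function.swap c y x| ≤ M := fun y x => hM x y
  set v := cTransform ε ρ₁ (Function.swap c) u
  have hvm : Measurable v := measurable_cTransform hc' hu
  have hvb := abs_cTransform_le (ρ := ρ₁) hε hc' hM' hu hub
  have hv : ∀ y, ∫ x, exp ((u x + v y - c x y) / ε) ∂ρ₁ = 1 := by
    intro y
    calc ∫ x, exp ((u x + v y - c x y) / ε) ∂ρ₁
        = exp (v y / ε) * ∫ x, exp ((u x - Function.swap c y x) / ε) ∂ρ₁ := by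
          rw [← integral_const_mul]
          congr 1 with x
          rw [← exp_add, Function.swap]
          ring_nf
      _ = 1 := by
          rw [← exp_neg_cTransform_div hε hc' hM' hu hub y, ← exp_add, neg_div, add_neg_cancel,
            exp_zero]
  have hu' : ∀ x, ∫ y, exp ((u x + v y - c x y) / ε) ∂ρ₂ = exp (-cTransform ε ρ₂ c v x₀ / ε) := by
    intro x
    have hfx : cTransform ε ρ₂ c v x - cTransform ε ρ₂ c v x₀ = u x := congrFun hfix x
    calc ∫ y, exp ((u x + v y - c x y) / ε) ∂ρ₂
        = exp (u x / ε) * ∫ y, exp ((v y - c x y) / ε) ∂ρ₂ := by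
          rw [← integral_const_mul]
          congr 1 with y
          rw [← exp_add]
          ring_nf
      _ = exp (-cTransform ε ρ₂ c v x₀ / ε) := by
          rw [← exp_neg_cTransform_div hε hc hM hvm hvb x, ← exp_add, ← hfx]
          ring_nf
  have hC := eq_of_integral_slices_eq (integrable_exp_add_sub hε hc hM hu hvm hub hvb) hu' hv
  exact ⟨fun x => (hu' x).trans hC, hv⟩

lemma abs_logMeanExp_add_logMeanExp_le (hε : 0 < ε) (hc : Measurable (Function.uncurry c))
    (hM : ∀ x y, |c x y| ≤ M) (hS : IsSchrodingerPair ρ₁ ρ₂ ε c u v) (hu : Measurable u)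
    (hv : Measurable v) (hub : ∀ x, |u x| ≤ U) (hvb : ∀ y, |v y| ≤ V) :
    |logMeanExp ε ρ₁ u + logMeanExp ε ρ₂ v| ≤ M := by
  have hE := integrable_exp_add_sub (ρ₁ := ρ₁) (ρ₂ := ρ₂) hε hc hM hu hv hub hvb
  have hE₀ : Integrable (fun p : X × Y => exp ((u p.1 + v p.2) / ε)) (ρ₁.prod ρ₂) :=
    integrable_exp_div hε ((hu.comp measurable_fst).add (hv.comp measurable_snd)) (K := U + V)
      fun p => by linarith [(abs_le.1 (hub p.1)).2, (abs_le.1 (hvb p.2)).2]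
  have hsum := logMeanExp_prod_add (ρ₁ := ρ₁) (ρ₂ := ρ₂)
    (integrable_exp_div hε hu fun x => (abs_le.1 (hub x)).2)
    (integrable_exp_div hε hv fun y => (abs_le.1 (hvb y)).2)
  have hzero : logMeanExp ε (ρ₁.prod ρ₂) (fun p => u p.1 + v p.2 - c p.1 p.2) = 0 := by
    rw [logMeanExp, integral_prod _ hE]
    simp [hS.1]
  have h := abs_logMeanExp_sub_le hε hE₀ hE fun p => by simpa using hM p.1 p.2
  rwa [hsum, hzero, sub_zero] at h

lemma exists_shift_abs_le_of_isSchrodingerPair (hε : 0 < ε) (hc : Measurable (Function.uncurry c))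
    (hM : ∀ x y, |c x y| ≤ M) (hS : IsSchrodingerPair ρ₁ ρ₂ ε c u v) (hu : Measurable u)
    (hv : Measurable v) (hub : ∀ x, |u x| ≤ U) (hvb : ∀ y, |v y| ≤ V) :
    ∃ a, (∀ x, |u x + a| ≤ 3 / 2 * M) ∧ ∀ y, |v y - a| ≤ 3 / 2 * M := by
  have hc' := measurable_uncurry_swap hc
  have hM' : ∀ y x, |Function.swap c y x| ≤ M := fun y x => hM x y
  have hu_c : ∀ x, |u x + logMeanExp ε ρ₂ v| ≤ M := fun x => by
    simpa only [cTransform_eq_of_integral_exp_eq_one hε hc hM hv hvb (u x) (hS.1 x)] using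
      abs_cTransform_add_logMeanExp_le (ρ := ρ₂) hε hc hM hv hvb x
  have hv_c : ∀ y, |v y + logMeanExp ε ρ₁ u| ≤ M := fun y => by
    have h : ∫ x, exp ((v y + u x - Function.swap c y x) / ε) ∂ρ₁ = 1 := by
      simpa only [Function.swap, add_comm (v y)] using hS.2 y
    simpa only [cTransform_eq_of_integral_exp_eq_one hε hc' hM' hu hub (v y) h] using
      abs_cTransform_add_logMeanExp_le (ρ := ρ₁) hε hc' hM' hu hub y
  have hL := abs_le.1 (abs_logMeanExp_add_logMeanExp_le hε hc hM hS hu hv hub hvb)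
  refine ⟨(logMeanExp ε ρ₂ v - logMeanExp ε ρ₁ u) / 2, fun x => ?_, fun y => ?_⟩
  · have h := abs_le.1 (hu_c x)
    rw [abs_le]
    constructor <;> linarith
  · have h := abs_le.1 (hv_c y)
    rw [abs_le]
    constructor <;> linarith

theorem exists_isSchrodingerPair (hε : 0 < ε) (hc : Measurable (Function.uncurry c))
    (hM : ∀ x y, |c x y| ≤ M) :
    ∃ u v, Measurable u ∧ Measurable v ∧ (∀ x, |u x| ≤ 3 / 2 * M) ∧ (∀ y, |v y| ≤ 3 / 2 * M) ∧
      IsSchrodingerPair ρ₁ ρ₂ ε c u v := by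
  obtain ⟨x₀⟩ := nonempty_of_isProbabilityMeasure ρ₁
  obtain ⟨u, hu, hub, hfix⟩ := exists_fixedPoint_sinkhornMap (ρ₁ := ρ₁) (ρ₂ := ρ₂) hε hc hM x₀
  have hS := isSchrodingerPair_of_fixedPoint hε hc hM hu hub hfix
  have hv := measurable_cTransform (ε := ε) (ρ := ρ₁) (measurable_uncurry_swap hc) hu
  obtain ⟨a, hua, hva⟩ := exists_shift_abs_le_of_isSchrodingerPair hε hc hM hS hu hv hub
    (abs_cTransform_le hε (measurable_uncurry_swap hc) (fun y x => hM x y) hu hub)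
  exact ⟨_, _, hu.add_const a, hv.sub_const a, hua, hva, hS.shift a⟩

end Schrodinger

lemma exp_mul_le_mul_exp {ε : ℝ} (hε : 0 < ε) (a a₀ b b₀ c : ℝ) :
    exp ((a₀ + b₀ - c) / ε) * (ε + (a - a₀) + (b - b₀)) ≤ ε * exp ((a + b - c) / ε) := by
  rw [show (a + b - c) / ε = (a₀ + b₀ - c) / ε + (a - a₀ + (b - b₀)) / ε by ring, exp_add,
    mul_left_comm]
  refine mul_le_mul_of_nonneg_left ?_ (exp_pos _).le
  calc ε + (a - a₀) + (b - b₀) = ε * ((a - a₀ + (b - b₀)) / ε + 1) := by field_simp; ring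
    _ ≤ ε * exp ((a - a₀ + (b - b₀)) / ε) := mul_le_mul_of_nonneg_left (add_one_le_exp _) hε.le

lemma exp_mul_lt_mul_exp {ε : ℝ} (hε : 0 < ε) {a a₀ b b₀ : ℝ} (c : ℝ)
    (h : a - a₀ + (b - b₀) ≠ 0) :
    exp ((a₀ + b₀ - c) / ε) * (ε + (a - a₀) + (b - b₀)) < ε * exp ((a + b - c) / ε) := by
  rw [show (a + b - c) / ε = (a₀ + b₀ - c) / ε + (a - a₀ + (b - b₀)) / ε by ring, exp_add,
    mul_left_comm]
  refine mul_lt_mul_of_pos_left ?_ (exp_pos _)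
  calc ε + (a - a₀) + (b - b₀) = ε * ((a - a₀ + (b - b₀)) / ε + 1) := by field_simp; ring
    _ < ε * exp ((a - a₀ + (b - b₀)) / ε) :=
      mul_lt_mul_of_pos_left (add_one_lt_exp (div_ne_zero h hε.ne')) hε

def dualGap {X Y : Type*} (ε : ℝ) (c : X → Y → ℝ) (u₀ u : X → ℝ) (v₀ v : Y → ℝ) (p : X × Y) :
    ℝ :=
  ε * exp ((u p.1 + v p.2 - c p.1 p.2) / ε)
    - exp ((u₀ p.1 + v₀ p.2 - c p.1 p.2) / ε) * (ε + (u p.1 - u₀ p.1) + (v p.2 - v₀ p.2))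

lemma dualGap_nonneg {X Y : Type*} {ε : ℝ} (hε : 0 < ε) (c : X → Y → ℝ) (u₀ u : X → ℝ)
    (v₀ v : Y → ℝ) : 0 ≤ dualGap ε c u₀ u v₀ v := fun p =>
  sub_nonneg.2 (exp_mul_le_mul_exp hε (u p.1) (u₀ p.1) (v p.2) (v₀ p.2) (c p.1 p.2))

section Optimality

variable {X Y : Type*} [MeasurableSpace X] [MeasurableSpace Y] {ρ₁ : Measure X} {ρ₂ : Measure Y}
  {ε M U V : ℝ} {c : X → Y → ℝ} {u u₀ : X → ℝ} {v v₀ : Y → ℝ}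

def dualFunctional (ρ₁ : Measure X) (ρ₂ : Measure Y) (c : X → Y → ℝ) (ε : ℝ) (u : X → ℝ)
    (v : Y → ℝ) : ℝ :=
  ∫ x, u x ∂ρ₁ + ∫ y, v y ∂ρ₂ - ε * ∫ p, exp ((u p.1 + v p.2 - c p.1 p.2) / ε) ∂(ρ₁.prod ρ₂)

lemma Dext_eq_dualFunctional (hu : Integrable u ρ₁) (hv : Integrable v ρ₂)
    (hE : Integrable (fun p : X × Y => exp ((u p.1 + v p.2 - c p.1 p.2) / ε)) (ρ₁.prod ρ₂)) :
    Dext ρ₁ ρ₂ c ε u v = dualFunctional ρ₁ ρ₂ c ε u v :=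
  if_pos ⟨hu, hv, hE⟩

variable [IsProbabilityMeasure ρ₁] [IsProbabilityMeasure ρ₂]

lemma exists_ae_eq_of_ae_prod_eq {f : X → ℝ} {g : Y → ℝ}
    (h : ∀ᵐ p ∂(ρ₁.prod ρ₂), f p.1 = g p.2) :
    ∃ a, (∀ᵐ x ∂ρ₁, f x = a) ∧ ∀ᵐ y ∂ρ₂, g y = a := by
  have h' := Measure.ae_ae_of_ae_prod h
  obtain ⟨x₁, hx₁⟩ := h'.exists
  refine ⟨f x₁, ?_, hx₁.mono fun y hy => hy.symm⟩
  filter_upwards [h'] with x hx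
  obtain ⟨y, hy, hy₁⟩ := (hx.and hx₁).exists
  rw [hy, hy₁]

lemma integrable_exp_add_sub_mul (hε : 0 < ε) (hc : Measurable (Function.uncurry c))
    (hM : ∀ x y, |c x y| ≤ M) (hu₀ : Measurable u₀) (hv₀ : Measurable v₀) (hu₀b : ∀ x, |u₀ x| ≤ U)
    (hv₀b : ∀ y, |v₀ y| ≤ V) {g : X × Y → ℝ} (hg : Integrable g (ρ₁.prod ρ₂)) :
    Integrable (fun p => exp ((u₀ p.1 + v₀ p.2 - c p.1 p.2) / ε) * g p) (ρ₁.prod ρ₂) :=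
  hg.bdd_mul (integrable_exp_add_sub hε hc hM hu₀ hv₀ hu₀b hv₀b).aestronglyMeasurable
    (c := exp ((U + V + M) / ε)) <| ae_of_all _ fun p => by
      rw [Real.norm_of_nonneg (exp_pos _).le]
      exact exp_le_exp.2 (div_le_div_of_nonneg_right (by linarith [(abs_le.1 (hu₀b p.1)).2,
        (abs_le.1 (hv₀b p.2)).2, (abs_le.1 (hM p.1 p.2)).1]) hε.le)

lemma integral_exp_add_sub_mul_add (hε : 0 < ε) (hc : Measurable (Function.uncurry c))
    (hM : ∀ x y, |c x y| ≤ M) (hS : IsSchrodingerPair ρ₁ ρ₂ ε c u₀ v₀) (hu₀ : Measurable u₀)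
    (hv₀ : Measurable v₀) (hu₀b : ∀ x, |u₀ x| ≤ U) (hv₀b : ∀ y, |v₀ y| ≤ V) {f : X → ℝ}
    {g : Y → ℝ} (hf : Integrable f ρ₁) (hg : Integrable g ρ₂) :
    ∫ p, exp ((u₀ p.1 + v₀ p.2 - c p.1 p.2) / ε) * (f p.1 + g p.2) ∂(ρ₁.prod ρ₂)
      = ∫ x, f x ∂ρ₁ + ∫ y, g y ∂ρ₂ := by
  have hf' := integrable_exp_add_sub_mul hε hc hM hu₀ hv₀ hu₀b hv₀b (hf.comp_fst ρ₂)
  have hg' := integrable_exp_add_sub_mul hε hc hM hu₀ hv₀ hu₀b hv₀b (hg.comp_snd ρ₁)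
  simp only [mul_add]
  rw [integral_add hf' hg', integral_prod _ hf', integral_prod_symm _ hg']
  simp only [integral_mul_const, hS.1, hS.2, one_mul]

lemma integrable_dualGap (hε : 0 < ε) (hc : Measurable (Function.uncurry c))
    (hM : ∀ x y, |c x y| ≤ M) (hu₀ : Measurable u₀) (hv₀ : Measurable v₀)
    (hu₀b : ∀ x, |u₀ x| ≤ U) (hv₀b : ∀ y, |v₀ y| ≤ V) (hu : Integrable u ρ₁)
    (hv : Integrable v ρ₂)
    (hE : Integrable (fun p : X × Y => exp ((u p.1 + v p.2 - c p.1 p.2) / ε)) (ρ₁.prod ρ₂)) :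
    Integrable (dualGap ε c u₀ u v₀ v) (ρ₁.prod ρ₂) := by
  have hf : Integrable (fun x => ε + (u x - u₀ x)) ρ₁ :=
    (integrable_const ε).add (hu.sub (.of_bound hu₀.aestronglyMeasurable U (ae_of_all _ hu₀b)))
  have hg : Integrable (fun y => v y - v₀ y) ρ₂ :=
    hv.sub (.of_bound hv₀.aestronglyMeasurable V (ae_of_all _ hv₀b))
  have hfg : Integrable (fun p : X × Y => ε + (u p.1 - u₀ p.1) + (v p.2 - v₀ p.2))
      (ρ₁.prod ρ₂) :=
    (hf.comp_fst ρ₂).add (hg.comp_snd ρ₁)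
  exact (hE.const_mul ε).sub (integrable_exp_add_sub_mul hε hc hM hu₀ hv₀ hu₀b hv₀b hfg)

lemma dualFunctional_sub_eq_integral_dualGap (hε : 0 < ε) (hc : Measurable (Function.uncurry c))
    (hM : ∀ x y, |c x y| ≤ M) (hS : IsSchrodingerPair ρ₁ ρ₂ ε c u₀ v₀) (hu₀ : Measurable u₀)
    (hv₀ : Measurable v₀) (hu₀b : ∀ x, |u₀ x| ≤ U) (hv₀b : ∀ y, |v₀ y| ≤ V)
    (hu : Integrable u ρ₁) (hv : Integrable v ρ₂)
    (hE : Integrable (fun p : X × Y => exp ((u p.1 + v p.2 - c p.1 p.2) / ε)) (ρ₁.prod ρ₂)) :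
    dualFunctional ρ₁ ρ₂ c ε u₀ v₀ - dualFunctional ρ₁ ρ₂ c ε u v
      = ∫ p, dualGap ε c u₀ u v₀ v p ∂(ρ₁.prod ρ₂) := by
  have hu₀i : Integrable u₀ ρ₁ := .of_bound hu₀.aestronglyMeasurable U (ae_of_all _ hu₀b)
  have hv₀i : Integrable v₀ ρ₂ := .of_bound hv₀.aestronglyMeasurable V (ae_of_all _ hv₀b)
  have hdu : Integrable (fun x => u x - u₀ x) ρ₁ := hu.sub hu₀i
  have hf : Integrable (fun x => ε + (u x - u₀ x)) ρ₁ := (integrable_const ε).add hdu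
  have hg : Integrable (fun y => v y - v₀ y) ρ₂ := hv.sub hv₀i
  have hfg : Integrable (fun p : X × Y => ε + (u p.1 - u₀ p.1) + (v p.2 - v₀ p.2))
      (ρ₁.prod ρ₂) :=
    (hf.comp_fst ρ₂).add (hg.comp_snd ρ₁)
  have hone := integral_exp_add_sub_mul_add hε hc hM hS hu₀ hv₀ hu₀b hv₀b
    (integrable_const (1 : ℝ)) (integrable_const (0 : ℝ))
  simp only [add_zero, mul_one, integral_const, probReal_univ, one_smul] at hone
  simp only [dualGap]
  rw [integral_sub (hE.const_mul ε)
      (integrable_exp_add_sub_mul hε hc hM hu₀ hv₀ hu₀b hv₀b hfg),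
    integral_const_mul, integral_exp_add_sub_mul_add hε hc hM hS hu₀ hv₀ hu₀b hv₀b hf hg,
    integral_add (integrable_const ε) hdu, integral_sub hu hu₀i, integral_sub hv hv₀i]
  simp only [dualFunctional, hone, integral_const, probReal_univ, one_smul]
  ring

theorem dualFunctional_le_of_isSchrodingerPair (hε : 0 < ε)
    (hc : Measurable (Function.uncurry c)) (hM : ∀ x y, |c x y| ≤ M)
    (hS : IsSchrodingerPair ρ₁ ρ₂ ε c u₀ v₀) (hu₀ : Measurable u₀) (hv₀ : Measurable v₀)
    (hu₀b : ∀ x, |u₀ x| ≤ U) (hv₀b : ∀ y, |v₀ y| ≤ V) (hu : Integrable u ρ₁)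
    (hv : Integrable v ρ₂)
    (hE : Integrable (fun p : X × Y => exp ((u p.1 + v p.2 - c p.1 p.2) / ε)) (ρ₁.prod ρ₂)) :
    dualFunctional ρ₁ ρ₂ c ε u v ≤ dualFunctional ρ₁ ρ₂ c ε u₀ v₀ := by
  have h := dualFunctional_sub_eq_integral_dualGap hε hc hM hS hu₀ hv₀ hu₀b hv₀b hu hv hE
  have h₀ := integral_nonneg (μ := ρ₁.prod ρ₂) (dualGap_nonneg hε c u₀ u v₀ v)
  linarith

theorem exists_ae_shift_of_dualFunctional_eq (hε : 0 < ε)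
    (hc : Measurable (Function.uncurry c)) (hM : ∀ x y, |c x y| ≤ M)
    (hS : IsSchrodingerPair ρ₁ ρ₂ ε c u₀ v₀) (hu₀ : Measurable u₀) (hv₀ : Measurable v₀)
    (hu₀b : ∀ x, |u₀ x| ≤ U) (hv₀b : ∀ y, |v₀ y| ≤ V) (hu : Integrable u ρ₁)
    (hv : Integrable v ρ₂)
    (hE : Integrable (fun p : X × Y => exp ((u p.1 + v p.2 - c p.1 p.2) / ε)) (ρ₁.prod ρ₂))
    (h : dualFunctional ρ₁ ρ₂ c ε u v = dualFunctional ρ₁ ρ₂ c ε u₀ v₀) :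
    ∃ a, u =ᵐ[ρ₁] (fun x => u₀ x + a) ∧ v =ᵐ[ρ₂] fun y => v₀ y - a := by
  have hgap := (integral_eq_zero_iff_of_nonneg (dualGap_nonneg hε c u₀ u v₀ v)
    (integrable_dualGap hε hc hM hu₀ hv₀ hu₀b hv₀b hu hv hE)).1 <| by
      rw [← dualFunctional_sub_eq_integral_dualGap hε hc hM hS hu₀ hv₀ hu₀b hv₀b hu hv hE, h,
        sub_self]
  have hae : ∀ᵐ p ∂(ρ₁.prod ρ₂), u p.1 - u₀ p.1 = v₀ p.2 - v p.2 := by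
    filter_upwards [hgap] with p hp
    by_contra hne
    have := exp_mul_lt_mul_exp hε (c p.1 p.2) (a := u p.1) (a₀ := u₀ p.1) (b := v p.2)
      (b₀ := v₀ p.2) fun h => hne (by linarith)
    simp only [dualGap, Pi.zero_apply] at hp
    linarith
  obtain ⟨a, ha, hb⟩ := exists_ae_eq_of_ae_prod_eq (f := fun x => u x - u₀ x)
    (g := fun y => v₀ y - v y) hae
  refine ⟨a, ha.mono fun x hx => ?_, hb.mono fun y hy => ?_⟩ <;> dsimp only at * <;> linarith

end Optimality

end EntropicDual

open EntropicDual

theorem dual_maximizer_exists_unique_general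
    {X Y : Type*}
    [MeasurableSpace X]
    [MeasurableSpace Y]
    (ρ₁ : Measure X) [IsProbabilityMeasure ρ₁]
    (ρ₂ : Measure Y) [IsProbabilityMeasure ρ₂]
    (ε : ℝ) (hε : 0 < ε)
    (c : X → Y → ℝ) (hc : Measurable (Function.uncurry c))
    (M : ℝ) (hM : ∀ x y, |c x y| ≤ M) :
    ∃ (u₀ : X → ℝ) (v₀ : Y → ℝ),
      Lexp ε ρ₁ u₀ ∧ Lexp ε ρ₂ v₀ ∧
      (∀ x, |u₀ x| ≤ 3 / 2 * M) ∧ (∀ y, |v₀ y| ≤ 3 / 2 * M) ∧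
      (∀ (u : X → ℝ) (v : Y → ℝ), Lexp ε ρ₁ u → Lexp ε ρ₂ v →
        Dext ρ₁ ρ₂ c ε u v ≤ Dext ρ₁ ρ₂ c ε u₀ v₀) ∧
      (∀ (u : X → ℝ) (v : Y → ℝ), Lexp ε ρ₁ u → Lexp ε ρ₂ v →
        Dext ρ₁ ρ₂ c ε u v = Dext ρ₁ ρ₂ c ε u₀ v₀ →
        ∃ a : ℝ, u =ᵐ[ρ₁] (fun x => u₀ x + a) ∧ v =ᵐ[ρ₂] (fun y => v₀ y - a)) := by
  obtain ⟨u₀, v₀, hu₀, hv₀, hu₀b, hv₀b, hS⟩ :=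
    exists_isSchrodingerPair (ρ₁ := ρ₁) (ρ₂ := ρ₂) hε hc hM
  have hD₀ := Dext_eq_dualFunctional (ρ₁ := ρ₁) (ρ₂ := ρ₂) (c := c) (ε := ε)
    (.of_bound hu₀.aestronglyMeasurable _ (ae_of_all _ hu₀b))
    (.of_bound hv₀.aestronglyMeasurable _ (ae_of_all _ hv₀b))
    (integrable_exp_add_sub hε hc hM hu₀ hv₀ hu₀b hv₀b)
  refine ⟨u₀, v₀, lexp_of_le hε hu₀ fun x => (abs_le.1 (hu₀b x)).2,
    lexp_of_le hε hv₀ fun y => (abs_le.1 (hv₀b y)).2, hu₀b, hv₀b, fun u v _ _ => ?_,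
    fun u v _ _ h => ?_⟩
  all_goals by_cases hint : Integrable u ρ₁ ∧ Integrable v ρ₂ ∧
    Integrable (fun p : X × Y => exp ((u p.1 + v p.2 - c p.1 p.2) / ε)) (ρ₁.prod ρ₂)
  · rw [Dext_eq_dualFunctional hint.1 hint.2.1 hint.2.2, hD₀, EReal.coe_le_coe_iff]
    exact dualFunctional_le_of_isSchrodingerPair hε hc hM hS hu₀ hv₀ hu₀b hv₀b
      hint.1 hint.2.1 hint.2.2
  · rw [Dext, if_neg hint]
    exact bot_le
  · rw [Dext_eq_dualFunctional hint.1 hint.2.1 hint.2.2, hD₀, EReal.coe_eq_coe_iff] at h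
    exact exists_ae_shift_of_dualFunctional_eq hε hc hM hS hu₀ hv₀ hu₀b hv₀b
      hint.1 hint.2.1 hint.2.2 h
  · rw [Dext, if_neg hint, hD₀] at h
    exact absurd h (EReal.bot_ne_coe _)

theorem dual_maximizer_exists_unique
    {X Y : Type*}
    [MeasurableSpace X] [TopologicalSpace X] [PolishSpace X] [BorelSpace X]
    [MeasurableSpace Y] [TopologicalSpace Y] [PolishSpace Y] [BorelSpace Y]
    (ρ₁ : Measure X) [IsProbabilityMeasure ρ₁]
    (ρ₂ : Measure Y) [IsProbabilityMeasure ρ₂]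
    (ε : ℝ) (hε : 0 < ε)
    (c : X → Y → ℝ) (hc : Measurable (Function.uncurry c))
    (M : ℝ) (hM : ∀ x y, |c x y| ≤ M) :
    ∃ (u₀ : X → ℝ) (v₀ : Y → ℝ),
      Lexp ε ρ₁ u₀ ∧ Lexp ε ρ₂ v₀ ∧
      (∀ x, |u₀ x| ≤ 3 / 2 * M) ∧ (∀ y, |v₀ y| ≤ 3 / 2 * M) ∧
      (∀ (u : X → ℝ) (v : Y → ℝ), Lexp ε ρ₁ u → Lexp ε ρ₂ v →
        Dext ρ₁ ρ₂ c ε u v ≤ Dext ρ₁ ρ₂ c ε u₀ v₀) ∧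
      (∀ (u : X → ℝ) (v : Y → ℝ), Lexp ε ρ₁ u → Lexp ε ρ₂ v →
        Dext ρ₁ ρ₂ c ε u v = Dext ρ₁ ρ₂ c ε u₀ v₀ →
        ∃ a : ℝ, u =ᵐ[ρ₁] (fun x => u₀ x + a) ∧ v =ᵐ[ρ₂] (fun y => v₀ y - a)) :=
  dual_maximizer_exists_unique_general ρ₁ ρ₂ ε hε c hc M hM

end
end

section
/- For every coupling γ ∈ Π(ρ₁,ρ₂), u ∈ L_exp^ε(ρ₁) and v ∈ L_exp^ε(ρ₂), one has ε KL(γ | K) ≥ D_ε(u,v) + ε, where K = e^{-c/ε} ρ₁⊗ρ₂; equality holds if and only if γ = e^{(u(x)+v(y)-c(x,y))/ε} ρ₁⊗ρ₂. -/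
open MeasureTheory Real

noncomputable section

/-!
Let `μ = e^{(u ⊕ v - c)/ε} ρ₁ ⊗ ρ₂` be the Gibbs measure. Its density with respect to
`K = e^{-c/ε} ρ₁ ⊗ ρ₂` is `e^{(u ⊕ v)/ε}`, so `log dγ/dK = log dγ/dμ + (u ⊕ v)/ε`, and integrating
against the coupling `γ` gives
  `ε KL(γ | K) = D_ε(u, v) + ε + ε klDiv(γ | μ)`,
where `klDiv` is the divergence of finite measures, `∫ log dγ/dμ dγ + μ(X × Y) - γ(X × Y)`.
Gibbs' inequality (`klDiv ≥ 0`, with equality iff `γ = μ`) gives both claims; it is the integrated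
form of `t log t - t + 1 ≥ 0`. If `e^{(u ⊕ v - c)/ε}` is not integrable then `D_ε(u, v) = -∞`
and `μ` has infinite mass, so `γ ≠ μ`.
-/

open InformationTheory
open scoped ENNReal

lemma KL_ne_bot {Z : Type*} [MeasurableSpace Z] (μ ν : Measure Z) : KL μ ν ≠ ⊥ := by
  unfold KL
  split_ifs <;> simp

lemma EReal.coe_add_eq_left_iff {a : ℝ} {b : EReal} : (a : EReal) + b = a ↔ b = 0 := by
  induction b using EReal.rec <;> simp [← EReal.coe_add]

lemma EReal.coe_mul_le_and_eq_iff_of_add_ennreal {ε a : ℝ} (hε : 0 < ε) (k : ℝ≥0∞) :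
    ((ε * a : ℝ) : EReal) ≤ ε * (a + k) ∧ ((ε : EReal) * (a + k) = (ε * a : ℝ) ↔ k = 0) := by
  rw [EReal.left_distrib_of_nonneg_of_ne_top (EReal.coe_nonneg.2 hε.le) (EReal.coe_ne_top ε),
    ← EReal.coe_mul, EReal.coe_add_eq_left_iff, mul_eq_zero, EReal.coe_ennreal_eq_zero]
  exact ⟨le_add_of_nonneg_right (mul_nonneg (EReal.coe_nonneg.2 hε.le)
    (EReal.coe_ennreal_nonneg _)), by simp [hε.ne']⟩

section WithDensity

variable {α : Type*} [MeasurableSpace α] {ν γ : Measure α} {f g φ : α → ℝ}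

lemma isFiniteMeasure_withDensity_ofReal_iff (hf : AEStronglyMeasurable f ν) (h0 : 0 ≤ᵐ[ν] f) :
    IsFiniteMeasure (ν.withDensity fun x => ENNReal.ofReal (f x)) ↔ Integrable f ν := by
  rw [isFiniteMeasure_iff, withDensity_apply _ MeasurableSet.univ, setLIntegral_univ,
    Integrable, hasFiniteIntegral_iff_ofReal h0]
  exact ⟨fun h => ⟨hf, h⟩, fun h => h.2⟩

lemma measureReal_univ_withDensity_ofReal (hf : AEStronglyMeasurable f ν) (h0 : 0 ≤ᵐ[ν] f) :
    (ν.withDensity fun x => ENNReal.ofReal (f x)).real Set.univ = ∫ x, f x ∂ν := by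
  rw [measureReal_def, withDensity_apply _ MeasurableSet.univ, setLIntegral_univ,
    integral_eq_lintegral_of_nonneg_ae h0 hf]

lemma absolutelyContinuous_withDensity_exp_iff (hg : Measurable g) :
    γ ≪ ν.withDensity (fun x => ENNReal.ofReal (exp (g x))) ↔ γ ≪ ν :=
  ⟨fun h => h.trans (withDensity_absolutelyContinuous _ _),
    fun h => h.trans (withDensity_absolutelyContinuous' (by fun_prop)
      (ae_of_all _ fun x => by simp [exp_pos]))⟩

lemma llr_withDensity_exp_right [SigmaFinite γ] [SigmaFinite ν] (hγν : γ ≪ ν)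
    (hg : Measurable g) :
    llr γ (ν.withDensity fun x => ENNReal.ofReal (exp (g x))) =ᵐ[γ]
      fun x => llr γ ν x - g x := by
  filter_upwards [hγν.ae_le (Measure.rnDeriv_withDensity_right γ ν
      (f := fun x => ENNReal.ofReal (exp (g x))) (by fun_prop)
      (ae_of_all _ fun x => by simp [exp_pos]) (ae_of_all _ fun _ => by simp)),
    Measure.rnDeriv_pos hγν, hγν.ae_le (Measure.rnDeriv_lt_top γ ν)] with x hx hpos hlt
  rw [llr, hx, ENNReal.toReal_mul, ENNReal.toReal_inv, ENNReal.toReal_ofReal (exp_nonneg _),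
    log_mul (by positivity) (ENNReal.toReal_pos hpos.ne' hlt.ne).ne', log_inv, log_exp, llr]
  ring

lemma llr_withDensity_exp_eq_llr_add [SigmaFinite γ] [SigmaFinite ν] (hγν : γ ≪ ν)
    (hg : Measurable g) (hφ : Measurable φ) :
    llr γ (ν.withDensity fun x => ENNReal.ofReal (exp (g x))) =ᵐ[γ]
      fun x => llr γ (ν.withDensity fun x => ENNReal.ofReal (exp (φ x + g x))) x + φ x := by
  filter_upwards [llr_withDensity_exp_right hγν hg,
    llr_withDensity_exp_right (g := fun x => φ x + g x) hγν (hφ.add hg)] with x hK hμ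
  rw [hK, hμ]
  ring

lemma KL_withDensity_exp_eq_add_klDiv [IsFiniteMeasure γ] [SigmaFinite ν]
    (hg : Measurable g) (hφ : Measurable φ) (hφγ : Integrable φ γ)
    [IsFiniteMeasure (ν.withDensity fun x => ENNReal.ofReal (exp (φ x + g x)))] :
    KL γ (ν.withDensity fun x => ENNReal.ofReal (exp (g x))) =
      ((∫ x, φ x ∂γ + γ.real Set.univ -
          (ν.withDensity fun x => ENNReal.ofReal (exp (φ x + g x))).real Set.univ : ℝ) : EReal) +
        klDiv γ (ν.withDensity fun x => ENNReal.ofReal (exp (φ x + g x))) := by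
  have hφg : Measurable fun x => φ x + g x := hφ.add hg
  set μ := ν.withDensity fun x => ENNReal.ofReal (exp (φ x + g x))
  have hac_iff : γ ≪ ν.withDensity (fun x => ENNReal.ofReal (exp (g x))) ↔ γ ≪ μ := by
    rw [absolutelyContinuous_withDensity_exp_iff hg, absolutelyContinuous_withDensity_exp_iff hφg]
  by_cases hγν : γ ≪ ν
  · have hγμ : γ ≪ μ := (absolutelyContinuous_withDensity_exp_iff hφg).2 hγν
    have hllr := llr_withDensity_exp_eq_llr_add hγν hg hφ
    by_cases hint : Integrable (llr γ μ) γ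
    · rw [KL, if_pos ⟨hac_iff.2 hγμ, (hint.add hφγ).congr hllr.symm⟩,
        ← EReal.coe_ennreal_toReal (klDiv_ne_top hγμ hint), toReal_klDiv hγμ hint,
        ← EReal.coe_add, EReal.coe_eq_coe_iff]
      rw [show (fun z => log (γ.rnDeriv _ z).toReal) = llr γ _ from rfl, integral_congr_ae hllr,
        integral_add hint hφγ]
      ring
    · have hintK : ¬ Integrable (llr γ (ν.withDensity fun x => ENNReal.ofReal (exp (g x)))) γ :=
        fun h => hint ((h.sub hφγ).congr (hllr.mono fun x hx => by simp [hx, μ]))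
      rw [KL, if_neg fun h => hintK h.2, klDiv_of_not_integrable hint, EReal.coe_ennreal_top,
        EReal.coe_add_top]
  · have hγμ : ¬ γ ≪ μ := fun h => hγν (h.trans (withDensity_absolutelyContinuous _ _))
    rw [KL, if_neg fun h => hγμ (hac_iff.1 h.1), klDiv_of_not_ac hγμ, EReal.coe_ennreal_top,
      EReal.coe_add_top]

end WithDensity

section Coupling

variable {X Y : Type*} [MeasurableSpace X] [MeasurableSpace Y] {ρ₁ : Measure X} {ρ₂ : Measure Y}
  {γ : Measure (X × Y)} {u : X → ℝ} {v : Y → ℝ}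

lemma integrable_fst_add_snd_of_map_eq (hγ₁ : γ.map Prod.fst = ρ₁) (hγ₂ : γ.map Prod.snd = ρ₂)
    (hu : Integrable u ρ₁) (hv : Integrable v ρ₂) : Integrable (fun p => u p.1 + v p.2) γ :=
  ((hγ₁ ▸ hu).comp_measurable measurable_fst).add ((hγ₂ ▸ hv).comp_measurable measurable_snd)

lemma integral_fst_add_snd_of_map_eq (hγ₁ : γ.map Prod.fst = ρ₁) (hγ₂ : γ.map Prod.snd = ρ₂)
    (hu : Integrable u ρ₁) (hv : Integrable v ρ₂) :
    ∫ p, u p.1 + v p.2 ∂γ = ∫ x, u x ∂ρ₁ + ∫ y, v y ∂ρ₂ := by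
  rw [integral_add ((hγ₁ ▸ hu).comp_measurable measurable_fst)
      ((hγ₂ ▸ hv).comp_measurable measurable_snd), ← hγ₁, ← hγ₂,
    integral_map measurable_fst.aemeasurable (hγ₁ ▸ hu.1),
    integral_map measurable_snd.aemeasurable (hγ₂ ▸ hv.1)]

end Coupling

section Dual

variable {X Y : Type*} [MeasurableSpace X] [MeasurableSpace Y] {ρ₁ : Measure X} {ρ₂ : Measure Y}
  {c : X → Y → ℝ} {ε : ℝ} {u : X → ℝ} {v : Y → ℝ}

lemma Dext_of_integrable (hu : Integrable u ρ₁) (hv : Integrable v ρ₂)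
    (hw : Integrable (fun p : X × Y => exp ((u p.1 + v p.2 - c p.1 p.2) / ε)) (ρ₁.prod ρ₂)) :
    Dext ρ₁ ρ₂ c ε u v = ((∫ x, u x ∂ρ₁ + ∫ y, v y ∂ρ₂ - ε * ((ρ₁.prod ρ₂).withDensity
      fun p => ENNReal.ofReal (exp ((u p.1 + v p.2 - c p.1 p.2) / ε))).real Set.univ : ℝ) :
        EReal) := by
  rw [Dext, if_pos ⟨hu, hv, hw⟩,
    measureReal_univ_withDensity_ofReal hw.1 (ae_of_all _ fun _ => exp_nonneg _)]

lemma Dext_of_not_integrable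
    (hw : ¬ Integrable (fun p : X × Y => exp ((u p.1 + v p.2 - c p.1 p.2) / ε)) (ρ₁.prod ρ₂)) :
    Dext ρ₁ ρ₂ c ε u v = ⊥ := by
  rw [Dext, if_neg fun h => hw h.2.2]

end Dual

theorem KL_ge_dual_with_equality_iff_general
    {X Y : Type*}
    [MeasurableSpace X]
    [MeasurableSpace Y]
    (ρ₁ : Measure X) [IsProbabilityMeasure ρ₁]
    (ρ₂ : Measure Y) [IsProbabilityMeasure ρ₂]
    (ε : ℝ) (hε : 0 < ε)
    (c : X → Y → ℝ) (hc : Measurable (Function.uncurry c))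
    (γ : Measure (X × Y)) [IsProbabilityMeasure γ]
    (hγ₁ : γ.map Prod.fst = ρ₁) (hγ₂ : γ.map Prod.snd = ρ₂)
    (u : X → ℝ) (hu : Measurable u) (hu1 : Integrable u ρ₁)
    (v : Y → ℝ) (hv : Measurable v) (hv1 : Integrable v ρ₂) :
    Dext ρ₁ ρ₂ c ε u v + (ε : EReal) ≤
      (ε : EReal) * KL γ ((ρ₁.prod ρ₂).withDensity
        (fun p => ENNReal.ofReal (Real.exp (-c p.1 p.2 / ε)))) ∧
    ((ε : EReal) * KL γ ((ρ₁.prod ρ₂).withDensity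
        (fun p => ENNReal.ofReal (Real.exp (-c p.1 p.2 / ε))))
       = Dext ρ₁ ρ₂ c ε u v + (ε : EReal)
      ↔ γ = (ρ₁.prod ρ₂).withDensity
          (fun p => ENNReal.ofReal (Real.exp ((u p.1 + v p.2 - c p.1 p.2) / ε)))) := by
  have hc' : Measurable fun p : X × Y => c p.1 p.2 := hc
  have hw_meas : AEStronglyMeasurable
      (fun p : X × Y => exp ((u p.1 + v p.2 - c p.1 p.2) / ε)) (ρ₁.prod ρ₂) := by
    fun_prop
  have hw_nonneg : 0 ≤ᵐ[ρ₁.prod ρ₂] fun p : X × Y => exp ((u p.1 + v p.2 - c p.1 p.2) / ε) :=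
    ae_of_all _ fun _ => exp_nonneg _
  by_cases hw : Integrable (fun p : X × Y => exp ((u p.1 + v p.2 - c p.1 p.2) / ε)) (ρ₁.prod ρ₂)
  · have hgibbs : (fun p : X × Y => ENNReal.ofReal (exp ((u p.1 + v p.2 - c p.1 p.2) / ε))) =
        fun p => ENNReal.ofReal (exp ((u p.1 + v p.2) / ε + -c p.1 p.2 / ε)) := by
      ext p
      ring_nf
    have := (isFiniteMeasure_withDensity_ofReal_iff hw_meas hw_nonneg).2 hw
    rw [hgibbs] at this
    rw [Dext_of_integrable hu1 hv1 hw, hgibbs, KL_withDensity_exp_eq_add_klDiv (by fun_prop)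
        (by fun_prop) ((integrable_fst_add_snd_of_map_eq hγ₁ hγ₂ hu1 hv1).div_const ε),
      integral_div, integral_fst_add_snd_of_map_eq hγ₁ hγ₂ hu1 hv1, probReal_univ (μ := γ),
      ← klDiv_eq_zero_iff, ← EReal.coe_add]
    convert EReal.coe_mul_le_and_eq_iff_of_add_ennreal hε _ using 4 <;> field_simp <;> ring
  · have hγ_ne : γ ≠ (ρ₁.prod ρ₂).withDensity
        fun p => ENNReal.ofReal (exp ((u p.1 + v p.2 - c p.1 p.2) / ε)) := fun h =>
      hw ((isFiniteMeasure_withDensity_ofReal_iff hw_meas hw_nonneg).1 (h ▸ inferInstance))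
    rw [Dext_of_not_integrable hw, EReal.bot_add]
    exact ⟨bot_le, iff_of_false ((EReal.mul_ne_bot _ _).2 ⟨.inl (EReal.coe_ne_bot ε),
      .inr (KL_ne_bot _ _), .inl (EReal.coe_ne_top ε), .inl (EReal.coe_nonneg.2 hε.le)⟩) hγ_ne⟩

theorem KL_ge_dual_with_equality_iff
    {X Y : Type*}
    [MeasurableSpace X] [TopologicalSpace X] [PolishSpace X] [BorelSpace X]
    [MeasurableSpace Y] [TopologicalSpace Y] [PolishSpace Y] [BorelSpace Y]
    (ρ₁ : Measure X) [IsProbabilityMeasure ρ₁]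
    (ρ₂ : Measure Y) [IsProbabilityMeasure ρ₂]
    (ε : ℝ) (hε : 0 < ε)
    (c : X → Y → ℝ) (hc : Measurable (Function.uncurry c))
    (γ : Measure (X × Y)) [IsProbabilityMeasure γ]
    (hγ₁ : γ.map Prod.fst = ρ₁) (hγ₂ : γ.map Prod.snd = ρ₂)
    (u : X → ℝ) (hu : Measurable u) (hu1 : Integrable u ρ₁)
    (huexp : Integrable (fun x => Real.exp (u x / ε)) ρ₁)
    (hupos : 0 < ∫ x, Real.exp (u x / ε) ∂ρ₁)
    (v : Y → ℝ) (hv : Measurable v) (hv1 : Integrable v ρ₂)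
    (hvexp : Integrable (fun y => Real.exp (v y / ε)) ρ₂)
    (hvpos : 0 < ∫ y, Real.exp (v y / ε) ∂ρ₂) :
    Dext ρ₁ ρ₂ c ε u v + (ε : EReal) ≤
      (ε : EReal) * KL γ ((ρ₁.prod ρ₂).withDensity
        (fun p => ENNReal.ofReal (Real.exp (-c p.1 p.2 / ε)))) ∧
    ((ε : EReal) * KL γ ((ρ₁.prod ρ₂).withDensity
        (fun p => ENNReal.ofReal (Real.exp (-c p.1 p.2 / ε))))
       = Dext ρ₁ ρ₂ c ε u v + (ε : EReal)
      ↔ γ = (ρ₁.prod ρ₂).withDensity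
          (fun p => ENNReal.ofReal (Real.exp ((u p.1 + v p.2 - c p.1 p.2) / ε)))) :=
  KL_ge_dual_with_equality_iff_general ρ₁ ρ₂ ε hε c hc γ hγ₁ hγ₂ u hu hu1 v hv hv1

end
end

section
/- (Compactness criterion in L^p) Let (X,d,μ) be a metric measure space with μ(X)=1 and let F ⊂ L^p(X,μ) be a family such that (a) ‖f‖_∞ ≤ M for all f ∈ F, and (b) for every σ > 0 there exist a set N^σ, a modulus of continuity ω_σ and β_σ ≥ 0 with |f(x)-f(x')| ≤ ω_σ(d(x,x')) + β_σ for all x,x' ∉ N^σ and all f ∈ F, where μ(N^σ) + β_σ → 0 as σ → 0. Then F is precompact in L^p(X,μ) for every 1 ≤ p < ∞. -/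
open MeasureTheory Filter

/-!
Pick `σₖ > 0` with `μ(N^{σₖ}) + β_{σₖ} < 2⁻ᵏ`; by Borel–Cantelli almost every `x` lies outside
`N^{σₖ}` for all large `k`. A diagonal (Tychonoff) argument gives a subsequence converging on a
countable set `T` that is dense in every complement of `N^{σₖ}`. For such `x` and large `k`, pick
`d ∈ T` outside `N^{σₖ}` close to `x`: the oscillation bound keeps the subsequence at `x`
uniformly within `ω_{σₖ}(d(x, d)) + β_{σₖ}` of the convergent subsequence at `d`, so it is Cauchy
at `x`. The a.e. limit is an `Lᵖ` limit by Vitali's theorem, a uniformly bounded sequence being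
uniformly integrable on a finite measure space.
-/

theorem measure_limsup_atTop_eq_zero_of_summable_measureReal {α : Type*} [MeasurableSpace α]
    {μ : Measure α} [IsFiniteMeasure μ] {s : ℕ → Set α} (hs : Summable fun k => μ.real (s k)) :
    μ (limsup s atTop) = 0 := by
  apply measure_limsup_atTop_eq_zero
  calc ∑' k, μ (s k) = ∑' k, ENNReal.ofReal (μ.real (s k)) :=
        tsum_congr fun _ => (ofReal_measureReal).symm
    _ = ENNReal.ofReal (∑' k, μ.real (s k)) :=
      (ENNReal.ofReal_tsum_of_nonneg (fun _ => measureReal_nonneg) hs).symm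
    _ ≠ ⊤ := ENNReal.ofReal_ne_top

theorem exists_countable_forall_subset_closure_inter {X ι : Type*} [TopologicalSpace X]
    [TopologicalSpace.PseudoMetrizableSpace X] [TopologicalSpace.SeparableSpace X] [Countable ι]
    (s : ι → Set X) : ∃ T : Set X, T.Countable ∧ ∀ i, s i ⊆ closure (T ∩ s i) := by
  choose t hts htc hst using fun i =>
    (TopologicalSpace.IsSeparable.of_separableSpace (s i)).exists_countable_dense_subset
  refine ⟨⋃ i, t i, Set.countable_iUnion htc, fun i => (hst i).trans (closure_mono ?_)⟩
  exact Set.subset_inter (Set.subset_iUnion t i) (hts i)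

theorem exists_strictMono_forall_tendsto_of_countable {X Y : Type*} [TopologicalSpace Y]
    [TopologicalSpace.PseudoMetrizableSpace Y] {K : Set Y} (hK : IsCompact K) {T : Set X}
    (hT : T.Countable) {f : ℕ → X → Y} (hfK : ∀ n, ∀ x ∈ T, f n x ∈ K) :
    ∃ φ : ℕ → ℕ, StrictMono φ ∧ ∀ x ∈ T, ∃ a, Tendsto (fun n => f (φ n) x) atTop (nhds a) := by
  have : Countable T := hT.to_subtype
  obtain ⟨a, -, φ, hφ, hconv⟩ := (isCompact_univ_pi fun _ : T => hK).tendsto_subseq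
    (x := fun n (x : T) => f n x) fun n => Set.mem_univ_pi.2 fun x => hfK n x x.2
  exact ⟨φ, hφ, fun x hx => ⟨a ⟨x, hx⟩, tendsto_pi_nhds.1 hconv ⟨x, hx⟩⟩⟩

theorem cauchySeq_of_forall_exists_cauchySeq_dist_lt {α : Type*} [PseudoMetricSpace α]
    {u : ℕ → α} (h : ∀ ε > 0, ∃ v : ℕ → α, CauchySeq v ∧ ∀ n, dist (u n) (v n) < ε) :
    CauchySeq u := by
  refine Metric.cauchySeq_iff.2 fun ε hε => ?_
  obtain ⟨v, hv, huv⟩ := h (ε / 3) (by positivity)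
  obtain ⟨N, hN⟩ := Metric.cauchySeq_iff.1 hv (ε / 3) (by positivity)
  refine ⟨N, fun m hm n hn => ?_⟩
  calc dist (u m) (u n) ≤ dist (u m) (v m) + dist (v m) (v n) + dist (v n) (u n) :=
        dist_triangle4 _ _ _ _
    _ < ε / 3 + ε / 3 + ε / 3 := by
        gcongr
        · exact huv m
        · exact hN m hm n hn
        · rw [dist_comm]; exact huv n
    _ = ε := by ring

theorem exists_mem_forall_abs_sub_lt_of_oscillation_le {X : Type*} [PseudoMetricSpace X]
    {F : Set (X → ℝ)} {S T : Set X} {ω : ℝ → ℝ} {β ε : ℝ}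
    (hω : Tendsto ω (nhdsWithin 0 (Set.Ici 0)) (nhds 0))
    (hosc : ∀ f ∈ F, ∀ x ∈ S, ∀ x' ∈ S, |f x - f x'| ≤ ω (dist x x') + β)
    (hST : S ⊆ closure (T ∩ S)) (hβε : β < ε) {x : X} (hx : x ∈ S) :
    ∃ d ∈ T, ∀ f ∈ F, |f x - f d| < ε := by
  obtain ⟨δ, hδ, hωδ⟩ := Metric.eventually_nhds_iff.1 <| eventually_nhdsWithin_iff.1 <|
    hω.eventually (gt_mem_nhds (sub_pos.2 hβε))
  obtain ⟨d, ⟨hdT, hdS⟩, hxd⟩ := Metric.mem_closure_iff.1 (hST hx) δ hδ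
  refine ⟨d, hdT, fun f hf => ?_⟩
  have hωd : ω (dist x d) < ε - β := by
    refine hωδ ?_ dist_nonneg
    rwa [Real.dist_eq, sub_zero, abs_of_nonneg dist_nonneg]
  linarith [hosc f hf x hx d hdS]

theorem tendsto_eLpNorm_sub_of_tendsto_ae_of_norm_le {α E : Type*} [MeasurableSpace α]
    [NormedAddCommGroup E] {μ : Measure α} [IsFiniteMeasure μ] {p : ENNReal} (hp : 1 ≤ p)
    (hp' : p ≠ ⊤) {f : ℕ → α → E} {g : α → E} (hf : ∀ n, AEStronglyMeasurable (f n) μ)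
    {M : ℝ} (hfM : ∀ n x, ‖f n x‖ ≤ M)
    (hfg : ∀ᵐ x ∂μ, Tendsto (fun n => f n x) atTop (nhds (g x))) :
    Tendsto (fun n => eLpNorm (f n - g) p μ) atTop (nhds 0) := by
  have hgM : ∀ᵐ x ∂μ, ‖g x‖ ≤ M := by
    filter_upwards [hfg] with x hx
    exact le_of_tendsto hx.norm (Eventually.of_forall fun n => hfM n x)
  have hg : MemLp g p μ := .of_bound (aestronglyMeasurable_of_tendsto_ae atTop hf hfg) M hgM
  have hui : UnifIntegrable f p μ := by
    intro ε hε
    obtain ⟨δ, hδ, hMδ⟩ := unifIntegrable_const (ι := ℕ) hp hp' (memLp_const (μ := μ) M) hε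
    refine ⟨δ, hδ, fun n s hs hμs => (eLpNorm_mono fun x => ?_).trans (hMδ n s hs hμs)⟩
    by_cases hxs : x ∈ s
    · simpa [Set.indicator_of_mem hxs] using (hfM n x).trans (le_abs_self M)
    · simp [Set.indicator_of_notMem hxs]
  exact tendsto_Lp_finite_of_tendsto_ae hp hp' hf hg hui hfg

theorem cauchySeq_of_tendsto_on_dense_of_oscillation_le {X : Type*} [PseudoMetricSpace X]
    {F : Set (X → ℝ)} {S : ℕ → Set X} {T : Set X} {ω : ℕ → ℝ → ℝ} {β : ℕ → ℝ}
    (hω : ∀ k, Tendsto (ω k) (nhdsWithin 0 (Set.Ici 0)) (nhds 0))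
    (hβ : Tendsto β atTop (nhds 0))
    (hosc : ∀ k, ∀ f ∈ F, ∀ x ∈ S k, ∀ x' ∈ S k, |f x - f x'| ≤ ω k (dist x x') + β k)
    (hST : ∀ k, S k ⊆ closure (T ∩ S k)) {u : ℕ → X → ℝ} (hu : ∀ n, u n ∈ F)
    (hT : ∀ d ∈ T, ∃ a, Tendsto (fun n => u n d) atTop (nhds a)) {x : X}
    (hx : ∀ᶠ k in atTop, x ∈ S k) :
    CauchySeq fun n => u n x := by
  refine cauchySeq_of_forall_exists_cauchySeq_dist_lt fun ε hε => ?_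
  obtain ⟨k, hxk, hβk⟩ := (hx.and (hβ.eventually (gt_mem_nhds hε))).exists
  obtain ⟨d, hdT, hd⟩ :=
    exists_mem_forall_abs_sub_lt_of_oscillation_le (hω k) (hosc k) (hST k) hβk hxk
  obtain ⟨a, ha⟩ := hT d hdT
  exact ⟨_, ha.cauchySeq, fun n => hd _ (hu n)⟩

theorem lp_compactness_criterion_general
    {X : Type*} [MetricSpace X] [TopologicalSpace.SeparableSpace X]
    [MeasurableSpace X]
    (μ : Measure X) [IsProbabilityMeasure μ]
    (p : ENNReal) (hp : 1 ≤ p) (hp' : p ≠ ⊤)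
    (F : Set (X → ℝ)) (hFmeas : ∀ f ∈ F, Measurable f)
    (M : ℝ) (hFbd : ∀ f ∈ F, ∀ x, |f x| ≤ M)
    (N : ℝ → Set X) (ω : ℝ → ℝ → ℝ) (β : ℝ → ℝ)
    (hβ : ∀ σ > (0:ℝ), 0 ≤ β σ)
    (hωlim : ∀ σ > (0:ℝ), Tendsto (ω σ) (nhdsWithin 0 (Set.Ici 0)) (nhds 0))
    (hosc : ∀ σ > (0:ℝ), ∀ f ∈ F, ∀ x ∉ N σ, ∀ x' ∉ N σ,
      |f x - f x'| ≤ ω σ (dist x x') + β σ)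
    (hsmall : Tendsto (fun σ => (μ (N σ)).toReal + β σ)
      (nhdsWithin 0 (Set.Ioi 0)) (nhds 0)) :
    ∀ f : ℕ → X → ℝ, (∀ n, f n ∈ F) →
      ∃ (φ : ℕ → ℕ) (g : X → ℝ), StrictMono φ ∧
        Tendsto (fun n => eLpNorm (fun x => f (φ n) x - g x) p μ) atTop (nhds 0) := by
  intro f hf
  choose σ hσpos hσ using fun k : ℕ => (eventually_mem_nhdsWithin.and
    (hsmall.eventually (gt_mem_nhds (pow_pos (inv_pos.2 two_pos) k)))).exists
  have hgeom : Tendsto (fun k : ℕ => (2⁻¹ : ℝ) ^ k) atTop (nhds 0) :=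
    tendsto_pow_atTop_nhds_zero_of_lt_one (by norm_num) (by norm_num)
  have hμσ : ∀ k, μ.real (N (σ k)) ≤ 2⁻¹ ^ k := fun k =>
    (le_add_of_nonneg_right (hβ _ (hσpos k))).trans (hσ k).le
  have hβσ : Tendsto (fun k => β (σ k)) atTop (nhds 0) :=
    squeeze_zero (fun k => hβ _ (hσpos k))
      (fun k => (le_add_of_nonneg_left measureReal_nonneg).trans (hσ k).le) hgeom
  have hN : μ (limsup (fun k => N (σ k)) atTop) = 0 :=
    measure_limsup_atTop_eq_zero_of_summable_measureReal <|
      (summable_geometric_of_lt_one (by norm_num) (by norm_num)).of_nonneg_of_le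
        (fun _ => measureReal_nonneg) hμσ
  obtain ⟨T, hTc, hT⟩ := exists_countable_forall_subset_closure_inter fun k => (N (σ k))ᶜ
  obtain ⟨φ, hφ, hconv⟩ := exists_strictMono_forall_tendsto_of_countable
    (isCompact_Icc (a := -M) (b := M)) hTc fun n x _ => abs_le.1 (hFbd _ (hf n) x)
  refine ⟨φ, fun x => limUnder atTop fun n => f (φ n) x, hφ,
    tendsto_eLpNorm_sub_of_tendsto_ae_of_norm_le hp hp'
      (fun n => (hFmeas _ (hf _)).aestronglyMeasurable) (fun n x => hFbd _ (hf _) x) ?_⟩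
  filter_upwards [measure_eq_zero_iff_ae_notMem.1 hN] with x hx
  refine (cauchySeq_of_tendsto_on_dense_of_oscillation_le (fun k => hωlim _ (hσpos k)) hβσ
    (fun k => hosc _ (hσpos k)) hT (fun n => hf (φ n)) hconv ?_).tendsto_limUnder
  exact not_frequently.1 (mt mem_limsup_iff_frequently_mem.2 hx)

theorem lp_compactness_criterion
    {X : Type*} [MetricSpace X] [TopologicalSpace.SeparableSpace X]
    [MeasurableSpace X] [BorelSpace X]
    (μ : Measure X) [IsProbabilityMeasure μ]
    (p : ENNReal) (hp : 1 ≤ p) (hp' : p ≠ ⊤)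
    (F : Set (X → ℝ)) (hFmeas : ∀ f ∈ F, Measurable f)
    (M : ℝ) (hFbd : ∀ f ∈ F, ∀ x, |f x| ≤ M)
    (N : ℝ → Set X) (ω : ℝ → ℝ → ℝ) (β : ℝ → ℝ)
    (hβ : ∀ σ > (0:ℝ), 0 ≤ β σ)
    (hωmono : ∀ σ > (0:ℝ), ∀ s t : ℝ, s ≤ t → ω σ s ≤ ω σ t)
    (hωnonneg : ∀ σ > (0:ℝ), ∀ t, 0 ≤ ω σ t)
    (hωlim : ∀ σ > (0:ℝ), Tendsto (ω σ) (nhdsWithin 0 (Set.Ici 0)) (nhds 0))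
    (hosc : ∀ σ > (0:ℝ), ∀ f ∈ F, ∀ x ∉ N σ, ∀ x' ∉ N σ,
      |f x - f x'| ≤ ω σ (dist x x') + β σ)
    (hsmall : Tendsto (fun σ => (μ (N σ)).toReal + β σ)
      (nhdsWithin 0 (Set.Ioi 0)) (nhds 0)) :
    ∀ f : ℕ → X → ℝ, (∀ n, f n ∈ F) →
      ∃ (φ : ℕ → ℕ) (g : X → ℝ), StrictMono φ ∧
        Tendsto (fun n => eLpNorm (fun x => f (φ n) x - g x) p μ) atTop (nhds 0) :=
  lp_compactness_criterion_general μ p hp hp' F hFmeas M hFbd N ω β hβ hωlim hosc hsmall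
end
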